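/- arXiv:1801.10268 — 7 statements merged into one kernel-verified Lean document; each statement's English description precedes it below -/
import Mathlib

section
/- Let R = O/(s^ℓ) and A = R[X]/(X^2 - p, X^{2ℓ-1}) where p is the image of s, with π the image of X. Then A is a finite commutative local ring with maximal ideal Aπ of nilpotency degree 2ℓ-1, |A| = q^{2ℓ-1} and |R| = q^ℓ, where q is the size of the residue field of R. -/
set_option linter.unusedSectionVars false
set_option maxHeartbeats 1000000
open Polynomial

lemma card_hom_aux {G H : Type*} [AddGroup G] [AddGroup H] (f : G →+ H) :
    Nat.card G = Nat.card f.range * Nat.card f.ker := by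
  rw [AddSubgroup.card_eq_card_quotient_mul_card_addSubgroup f.ker]
  congr 1
  exact Nat.card_congr (QuotientAddGroup.quotientKerEquivRange f).toEquiv

lemma card_quot_aux {S : Type*} [CommRing S] (I : Ideal S) :
    Nat.card S = Nat.card (S ⧸ I) * Nat.card I := by
  have h := card_hom_aux (Ideal.Quotient.mk I).toAddMonoidHom
  have hr : (Ideal.Quotient.mk I).toAddMonoidHom.range = ⊤ := by
    rw [AddMonoidHom.range_eq_top]
    exact Ideal.Quotient.mk_surjective
  rw [h, hr]
  congr 1
  · exact Nat.card_congr AddSubgroup.topEquiv.toEquiv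
  · apply Nat.card_congr (Equiv.setCongr ?_)
    ext x
    simpa [AddMonoidHom.mem_ker] using Ideal.Quotient.eq_zero_iff_mem

section Rside
variable {R : Type} [CommRing R] [IsLocalRing R] [Finite R] (p : R) (ℓ q : ℕ)

lemma unit_of_not_mem (hmax : IsLocalRing.maximalIdeal R = Ideal.span {p})
    {y : R} (hy : y ∉ Ideal.span {p}) : IsUnit y := by
  by_contra h
  exact hy (hmax ▸ IsLocalRing.mem_maximalIdeal y |>.mpr h)

lemma pow_ne_zero_of_le (hnil' : Ideal.span {p} ^ (ℓ - 1) ≠ (⊥ : Ideal R))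
    {k : ℕ} (hk : k ≤ ℓ - 1) : p ^ k ≠ 0 := by
  intro h
  apply hnil'
  rw [Ideal.span_singleton_pow, Ideal.span_singleton_eq_bot]
  calc p ^ (ℓ - 1) = p ^ k * p ^ (ℓ - 1 - k) := by rw [← pow_add]; congr 1; omega
  _ = 0 := by rw [h, zero_mul]

lemma ann_p (hmax : IsLocalRing.maximalIdeal R = Ideal.span {p})
    (hnil' : Ideal.span {p} ^ (ℓ - 1) ≠ (⊥ : Ideal R))
    {x : R} (hx : p * x = 0) : x ∈ Ideal.span {p ^ (ℓ - 1)} := by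
  have key : ∀ d k, k + d = ℓ - 1 → ∀ x : R, p * x = 0 → x ∈ Ideal.span {p ^ k} →
      x ∈ Ideal.span {p ^ (ℓ - 1)} := by
    intro d
    induction d with
    | zero => intro k hk x _ hmem; rwa [show k = ℓ - 1 by omega] at hmem
    | succ d ih =>
      intro k hk x hx hmem
      obtain ⟨t, ht⟩ := Ideal.mem_span_singleton'.mp hmem
      by_cases htp : t ∈ Ideal.span {p}
      · obtain ⟨s, hs⟩ := Ideal.mem_span_singleton'.mp htp
        apply ih (k+1) (by omega) x hx
        exact Ideal.mem_span_singleton'.mpr ⟨s, by rw [← ht, ← hs, pow_succ]; ring⟩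
      · exfalso
        have hu := unit_of_not_mem p hmax htp
        have h3 : p ^ (k + 1) = 0 := by
          have h2 : t * p ^ (k+1) = 0 := by
            rw [pow_succ]
            calc t * (p ^ k * p) = p * (t * p ^ k) := by ring
            _ = p * x := by rw [ht]
            _ = 0 := hx
          obtain ⟨u, hu⟩ := hu
          have := congrArg (fun z => (↑u⁻¹ : R) * z) h2
          simpa [← hu, mul_zero, ← mul_assoc, u.inv_mul] using this
        exact pow_ne_zero_of_le p ℓ hnil' (by omega : k + 1 ≤ ℓ - 1) h3
  by_cases hl : ℓ - 1 = 0
  · rw [hl, pow_zero, Ideal.span_singleton_one]; trivial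
  · exact key (ℓ - 1) 0 (by omega) x hx
      (Ideal.mem_span_singleton'.mpr ⟨x, by rw [pow_zero, mul_one]⟩)

lemma mem_ker_iff_aux (hmax : IsLocalRing.maximalIdeal R = Ideal.span {p})
    (hnil : Ideal.span {p} ^ ℓ = (⊥ : Ideal R))
    (hnil' : Ideal.span {p} ^ (ℓ - 1) ≠ (⊥ : Ideal R)) (x : R) :
    p * x = 0 ↔ x ∈ Ideal.span {p ^ (ℓ - 1)} := by
  have hp0 : p ^ ℓ = 0 := by
    rw [← Ideal.span_singleton_eq_bot, ← Ideal.span_singleton_pow]; exact hnil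
  constructor
  · exact ann_p p ℓ hmax hnil'
  · rintro hm
    obtain ⟨t, rfl⟩ := Ideal.mem_span_singleton'.mp hm
    have hl : 1 ≤ ℓ := by
      by_contra h
      exact hnil' (by simpa [show ℓ = 0 by omega] using hnil)
    calc p * (t * p ^ (ℓ - 1)) = t * (p ^ (ℓ - 1) * p) := by ring
    _ = t * p ^ (ℓ - 1 + 1) := by rw [pow_succ]
    _ = 0 := by rw [show ℓ - 1 + 1 = ℓ by omega, hp0, mul_zero]

lemma card_span_step (hmax : IsLocalRing.maximalIdeal R = Ideal.span {p})
    (hnil : Ideal.span {p} ^ ℓ = (⊥ : Ideal R))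
    (hnil' : Ideal.span {p} ^ (ℓ - 1) ≠ (⊥ : Ideal R))
    {i : ℕ} (hi : i + 1 ≤ ℓ) :
    Nat.card (Ideal.span {p ^ i} : Ideal R) =
      Nat.card (Ideal.span {p ^ (i+1)} : Ideal R) *
        Nat.card (Ideal.span {p ^ (ℓ - 1)} : Ideal R) := by
  set g : (Ideal.span {p ^ i} : Ideal R) →+ R :=
    (AddMonoidHom.mulLeft p).comp ((Ideal.span {p ^ i}).toAddSubgroup.subtype) with hg
  have hgapp : ∀ x : (Ideal.span {p ^ i} : Ideal R), g x = p * (x : R) := fun x => rfl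
  rw [card_hom_aux g]
  congr 1
  · -- range = span p^{i+1}
    apply Nat.card_congr (Equiv.setCongr ?_)
    ext y
    constructor
    · rintro ⟨⟨x, hx⟩, rfl⟩
      obtain ⟨t, rfl⟩ := Ideal.mem_span_singleton'.mp hx
      exact Ideal.mem_span_singleton'.mpr ⟨t, by rw [hgapp, pow_succ]; ring⟩
    · rintro hy
      obtain ⟨t, rfl⟩ := Ideal.mem_span_singleton'.mp hy
      refine ⟨⟨t * p ^ i, Ideal.mem_span_singleton'.mpr ⟨t, rfl⟩⟩, ?_⟩
      rw [hgapp, pow_succ]; ring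
  · -- ker ≃ span p^{ℓ-1}
    apply Nat.card_congr
    refine Equiv.ofBijective
      (fun x => ⟨(x : (Ideal.span {p ^ i} : Ideal R)),
        ann_p p ℓ hmax hnil' (by
          have h := x.2
          rw [AddMonoidHom.mem_ker, hgapp] at h
          exact h)⟩) ⟨?_, ?_⟩
    · intro a b hab
      simp only [Subtype.mk.injEq] at hab
      exact Subtype.ext (Subtype.ext hab)
    · rintro ⟨y, hy⟩
      have hmem : y ∈ Ideal.span {p ^ i} := by
        obtain ⟨t, rfl⟩ := Ideal.mem_span_singleton'.mp hy
        exact Ideal.mem_span_singleton'.mpr ⟨t * p ^ (ℓ - 1 - i), by rw [mul_assoc, ← pow_add]; congr 2; omega⟩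
      have hker : g ⟨y, hmem⟩ = 0 := by
        rw [hgapp]
        exact (mem_ker_iff_aux p ℓ hmax hnil hnil' y).mpr hy
      exact ⟨⟨⟨y, hmem⟩, hker⟩, rfl⟩

lemma card_R_eq (hmax : IsLocalRing.maximalIdeal R = Ideal.span {p})
    (hnil : Ideal.span {p} ^ ℓ = (⊥ : Ideal R))
    (hnil' : Ideal.span {p} ^ (ℓ - 1) ≠ (⊥ : Ideal R))
    (hq : Nat.card (IsLocalRing.ResidueField R) = q) :
    Nat.card R = q ^ ℓ ∧ Nat.card (Ideal.span {p ^ (ℓ - 1)} : Ideal R) = q := by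
  have hp0 : p ^ ℓ = 0 := by
    rw [← Ideal.span_singleton_eq_bot, ← Ideal.span_singleton_pow]; exact hnil
  have hl : 1 ≤ ℓ := by
    by_contra h
    exact hnil' (by simpa [show ℓ = 0 by omega] using hnil)
  have hres : Nat.card (R ⧸ Ideal.span {p}) = q := by
    rw [← hq]
    exact Nat.card_congr (Ideal.quotEquivOfEq hmax.symm).toEquiv
  -- card R = q * N1
  have h1 : Nat.card R = q * Nat.card (Ideal.span {p} : Ideal R) := by
    rw [card_quot_aux (Ideal.span {p} : Ideal R), hres]
  -- card R = N1 * N_{ℓ-1} via mul-by-p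
  have h2 : Nat.card R = Nat.card (Ideal.span {p} : Ideal R) *
      Nat.card (Ideal.span {p ^ (ℓ - 1)} : Ideal R) := by
    rw [card_hom_aux (AddMonoidHom.mulLeft p)]
    congr 1
    · apply Nat.card_congr (Equiv.setCongr ?_)
      ext y
      simp only [AddMonoidHom.mem_range, AddMonoidHom.coe_mulLeft, SetLike.mem_coe,
        Ideal.mem_span_singleton']
      constructor
      · rintro ⟨x, rfl⟩; exact ⟨x, mul_comm x p⟩
      · rintro ⟨x, rfl⟩; exact ⟨x, mul_comm p x⟩
    · apply Nat.card_congr (Equiv.setCongr ?_)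
      ext y
      simpa [AddMonoidHom.mem_ker] using mem_ker_iff_aux p ℓ hmax hnil hnil' y
  have hN1pos : 0 < Nat.card (Ideal.span {p} : Ideal R) := Nat.card_pos
  have hNl1 : Nat.card (Ideal.span {p ^ (ℓ - 1)} : Ideal R) = q := by
    have := h1.symm.trans h2
    rw [mul_comm q _] at this
    exact (Nat.eq_of_mul_eq_mul_left hN1pos this).symm
  -- downward induction
  have key : ∀ d, d ≤ ℓ → Nat.card (Ideal.span {p ^ (ℓ - d)} : Ideal R) = q ^ d := by
    intro d
    induction d with
    | zero =>
      intro _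
      simp only [Nat.sub_zero, hp0, pow_zero]
      rw [Ideal.span_singleton_eq_bot.mpr rfl]
      simpa using Nat.card_congr (Submodule.botEquivPUnit (M := R)).toEquiv
    | succ d ih =>
      intro hd
      have h3 := card_span_step p ℓ hmax hnil hnil' (show (ℓ - d - 1) + 1 ≤ ℓ by omega)
      rw [show ℓ - d - 1 + 1 = ℓ - d by omega] at h3
      rw [show ℓ - (d+1) = ℓ - d - 1 by omega, h3, ih (by omega), hNl1, pow_succ]
  constructor
  · have h0 := key ℓ le_rfl
    rw [Nat.sub_self, pow_zero, Ideal.span_singleton_one] at h0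
    rw [← h0]
    exact Nat.card_congr (Submodule.topEquiv (M := R)).toEquiv.symm
  · exact hNl1

end Rside

section Bside
variable {R : Type} [CommRing R] [IsLocalRing R] [Finite R] (p : R) (ℓ q : ℕ)

local notation "f₀" => (X ^ 2 - C p : R[X])
local notation "mkB" => Ideal.Quotient.mk (Ideal.span {(X ^ 2 - C p : R[X])})

lemma monic_f0 : (f₀).Monic := monic_X_pow_sub_C p two_ne_zero

lemma ind_aux {t s : R} (h : mkB (C t + C s * X) = 0) : t = 0 ∧ s = 0 := by
  rw [Ideal.Quotient.eq_zero_iff_mem, Ideal.mem_span_singleton] at h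
  obtain ⟨c, hc⟩ := h
  have hr0 : C t + C s * X = 0 := by
    by_cases hc0 : c = 0
    · rw [hc0, mul_zero] at hc; exact hc
    · exfalso
      have hd : (C t + C s * X : R[X]).degree ≤ 1 := by
        rw [add_comm]
        exact degree_linear_le
      have hdeg : ((f₀) * c).degree = c.degree + 2 := by
        rw [mul_comm, (monic_f0 p).degree_mul, degree_X_pow_sub_C (by norm_num) p]
        norm_cast
      rw [← hc] at hdeg
      rw [hdeg] at hd
      have hc' : (0 : WithBot ℕ) ≤ c.degree := zero_le_degree_iff.mpr hc0
      have h2 : (2 : WithBot ℕ) ≤ 1 := le_trans (le_add_of_nonneg_left hc') hd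
      norm_num at h2
  constructor
  · have := congrArg (fun g : R[X] => g.coeff 0) hr0
    simpa using this
  · have := congrArg (fun g : R[X] => g.coeff 1) hr0
    simpa using this

lemma rep_aux (c : R[X] ⧸ Ideal.span {(X ^ 2 - C p : R[X])}) :
    ∃ t s : R, c = mkB (C t + C s * X) := by
  obtain ⟨h, rfl⟩ := Ideal.Quotient.mk_surjective c
  set r := h %ₘ f₀ with hr
  set d := h /ₘ f₀ with hd
  have hmod : mkB h = mkB r := by
    rw [Ideal.Quotient.eq]
    have hadd : r + f₀ * d = h := modByMonic_add_div h f₀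
    rw [show h - r = f₀ * d by rw [← hadd]; ring]
    exact Ideal.mem_span_singleton.mpr ⟨_, rfl⟩
  have hdeg : r.degree ≤ 1 := by
    have h2 := degree_modByMonic_lt h (monic_f0 p)
    rw [degree_X_pow_sub_C (by norm_num) p] at h2
    exact Order.le_of_lt_succ (by exact_mod_cast h2)
  refine ⟨r.coeff 0, r.coeff 1, ?_⟩
  rw [hmod]
  congr 1
  conv_lhs => rw [eq_X_add_C_of_degree_le_one hdeg]
  ring

lemma sq_aux : mkB (X ^ 2) = mkB (C p) := by
  rw [Ideal.Quotient.eq]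
  exact Ideal.subset_span rfl

end Bside

section Jside
variable {R : Type} [CommRing R] [IsLocalRing R] [Finite R] (p : R) (ℓ q : ℕ)

local notation "mkB" => Ideal.Quotient.mk (Ideal.span {(X ^ 2 - C p : R[X])})

lemma mul_aux (hap : p ^ (ℓ - 1) * p = 0) (t s : R) :
    mkB (C t + C s * X) * mkB (C (p ^ (ℓ - 1)) * X) = mkB (C (t * p ^ (ℓ - 1)) * X) := by
  rw [← map_mul, Ideal.Quotient.eq]
  refine Ideal.mem_span_singleton.mpr ⟨C (s * p ^ (ℓ - 1)), ?_⟩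
  have hC : (C (p ^ (ℓ - 1)) * C p : R[X]) = 0 := by
    rw [← C_mul, hap, C_0]
  rw [C_mul, C_mul]
  linear_combination (C s * X ^ 0 : R[X]) * hC

lemma g0_eq (hl1 : 1 ≤ ℓ) :
    mkB (X ^ (2 * ℓ - 1)) = mkB (C (p ^ (ℓ - 1)) * X) := by
  rw [Ideal.Quotient.eq, Ideal.mem_span_singleton]
  obtain ⟨c, hc⟩ := sub_dvd_pow_sub_pow (X ^ 2 : R[X]) (C p) (ℓ - 1)
  refine ⟨c * X, ?_⟩
  have hXp : (X : R[X]) ^ (2 * ℓ - 1) = (X ^ 2) ^ (ℓ - 1) * X := by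
    rw [← pow_mul, ← pow_succ]
    congr 1
    omega
  calc (X : R[X]) ^ (2 * ℓ - 1) - C (p ^ (ℓ - 1)) * X
      = ((X ^ 2) ^ (ℓ - 1) - (C p) ^ (ℓ - 1)) * X := by rw [hXp, ← C_pow]; ring
  _ = (X ^ 2 - C p) * (c * X) := by rw [hc]; ring

lemma Jset_aux (hl1 : 1 ≤ ℓ) (hap : p ^ (ℓ - 1) * p = 0)
    (x : R[X] ⧸ Ideal.span {(X ^ 2 - C p : R[X])}) :
    x ∈ (Ideal.span {(X ^ (2 * ℓ - 1) : R[X])}).map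
        (Ideal.Quotient.mk (Ideal.span {(X ^ 2 - C p : R[X])})) ↔
      ∃ t ∈ Ideal.span {p ^ (ℓ - 1)}, x = mkB (C t * X) := by
  rw [Ideal.map_span, Set.image_singleton, Ideal.mem_span_singleton]
  constructor
  · rintro ⟨c, hc⟩
    obtain ⟨t, s, rfl⟩ := rep_aux p c
    refine ⟨t * p ^ (ℓ - 1), Ideal.mem_span_singleton'.mpr ⟨t, rfl⟩, ?_⟩
    rw [hc, g0_eq p ℓ hl1,
      mul_comm (mkB (C (p ^ (ℓ - 1)) * X)) (mkB (C t + C s * X)), mul_aux p ℓ hap]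
  · rintro ⟨t, ht, rfl⟩
    obtain ⟨c, rfl⟩ := Ideal.mem_span_singleton'.mp ht
    refine ⟨mkB (C c + C 0 * X), ?_⟩
    rw [g0_eq p ℓ hl1,
      mul_comm (mkB (C (p ^ (ℓ - 1)) * X)) (mkB (C c + C 0 * X)), mul_aux p ℓ hap]

end Jside

noncomputable section

variable (R : Type) [CommRing R] [IsLocalRing R] [IsPrincipalIdealRing R] [Finite R]
variable (p : R) (ℓ q : ℕ)

/-- The ramified extension `A = R[X]/(X² - p, X^{2ℓ-1})`. -/
abbrev Aext : Type :=
  Polynomial R ⧸ Ideal.span ({X ^ 2 - C p, X ^ (2 * ℓ - 1)} : Set (Polynomial R))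

/-- The image `π` of `X` in `A`. -/
def piA : Aext R p ℓ :=
  Ideal.Quotient.mk (Ideal.span ({X ^ 2 - C p, X ^ (2 * ℓ - 1)} : Set (Polynomial R))) X

theorem stmt0
    (hℓ : 1 ≤ ℓ)
    (hmax : IsLocalRing.maximalIdeal R = Ideal.span {p})
    (hnil : Ideal.span {p} ^ ℓ = (⊥ : Ideal R))
    (hnil' : Ideal.span {p} ^ (ℓ - 1) ≠ (⊥ : Ideal R))
    (hq : Nat.card (IsLocalRing.ResidueField R) = q)
    (hodd : Odd q) :
    Finite (Aext R p ℓ) ∧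
    IsLocalRing (Aext R p ℓ) ∧
    (Ideal.span {piA R p ℓ}).IsMaximal ∧
    (∀ I : Ideal (Aext R p ℓ), I.IsMaximal → I = Ideal.span {piA R p ℓ}) ∧
    Ideal.span {piA R p ℓ} ^ (2 * ℓ - 1) = (⊥ : Ideal (Aext R p ℓ)) ∧
    Ideal.span {piA R p ℓ} ^ (2 * ℓ - 2) ≠ (⊥ : Ideal (Aext R p ℓ)) ∧
    Nat.card (Aext R p ℓ) = q ^ (2 * ℓ - 1) ∧
    Nat.card R = q ^ ℓ := by
  classical
  have hp0 : p ^ ℓ = 0 := by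
    rw [← Ideal.span_singleton_eq_bot, ← Ideal.span_singleton_pow]; exact hnil
  have hap : p ^ (ℓ - 1) * p = 0 := by
    rw [← pow_succ, show ℓ - 1 + 1 = ℓ by omega, hp0]
  have hpl1 : p ^ (ℓ - 1) ≠ 0 := pow_ne_zero_of_le p ℓ hnil' le_rfl
  obtain ⟨hcardR, hcardIdeal⟩ := card_R_eq p ℓ q hmax hnil hnil' hq
  haveI : Finite (IsLocalRing.ResidueField R) := Quotient.finite _
  have hqpos : 0 < q := hq ▸ Nat.card_pos
  -- ideal decomposition and the equivalence
  have hIsup : Ideal.span ({X ^ 2 - C p, X ^ (2 * ℓ - 1)} : Set R[X]) =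
      Ideal.span {(X ^ 2 - C p : R[X])} ⊔ Ideal.span {(X ^ (2 * ℓ - 1) : R[X])} :=
    Ideal.span_insert _ _
  set IB : Ideal R[X] := Ideal.span {(X ^ 2 - C p : R[X])} with hIBdef
  set JB : Ideal (R[X] ⧸ IB) :=
    (Ideal.span {(X ^ (2 * ℓ - 1) : R[X])}).map (Ideal.Quotient.mk IB) with hJBdef
  let e : Aext R p ℓ ≃+* (R[X] ⧸ IB) ⧸ JB :=
    (Ideal.quotEquivOfEq hIsup).trans (DoubleQuot.quotQuotEquivQuotSup _ _).symm
  have he : ∀ h : R[X],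
      e (Ideal.Quotient.mk (Ideal.span ({X ^ 2 - C p, X ^ (2 * ℓ - 1)} : Set R[X])) h) =
      Ideal.Quotient.mk JB (Ideal.Quotient.mk IB h) := by
    intro h
    show ((DoubleQuot.quotQuotEquivQuotSup _ _).symm (Ideal.quotEquivOfEq hIsup
      (Ideal.Quotient.mk _ h))) = _
    rw [Ideal.quotEquivOfEq_mk, DoubleQuot.quotQuotEquivQuotSup_symm_quotQuotMk]
    rfl
  -- finiteness
  let eRR : (R × R) ≃ (R[X] ⧸ IB) := Equiv.ofBijective
    (fun ts => Ideal.Quotient.mk IB (C ts.1 + C ts.2 * X)) (by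
      constructor
      · rintro ⟨t, s⟩ ⟨t', s'⟩ hts
        simp only at hts
        have hz : Ideal.Quotient.mk IB (C (t - t') + C (s - s') * X) = 0 := by
          rw [show (C (t - t') + C (s - s') * X : R[X]) =
            (C t + C s * X) - (C t' + C s' * X) by rw [C_sub, C_sub]; ring, map_sub, hts,
            sub_self]
        obtain ⟨h1, h2⟩ := ind_aux p hz
        have := sub_eq_zero.mp h1
        have := sub_eq_zero.mp h2
        simp_all
      · intro c
        obtain ⟨t, s, hc⟩ := rep_aux p c
        exact ⟨(t, s), hc.symm⟩)
  haveI hFinB : Finite (R[X] ⧸ IB) := Finite.of_equiv _ eRR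
  haveI hFinQ : Finite ((R[X] ⧸ IB) ⧸ JB) :=
    Finite.of_surjective (Ideal.Quotient.mk JB) Ideal.Quotient.mk_surjective
  haveI hFinA : Finite (Aext R p ℓ) := Finite.of_equiv _ e.toEquiv.symm
  -- cardinalities
  have hcardB : Nat.card (R[X] ⧸ IB) = q ^ ℓ * q ^ ℓ := by
    rw [← Nat.card_congr eRR, Nat.card_prod, hcardR]
  have hcardJB : Nat.card JB = q := by
    rw [← hcardIdeal]
    refine (Nat.card_congr (Equiv.ofBijective
      (fun t => (⟨Ideal.Quotient.mk IB (C t.1 * X),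
        (Jset_aux p ℓ hℓ hap _).mpr ⟨t.1, t.2, rfl⟩⟩ : JB)) ⟨?_, ?_⟩)).symm
    · rintro ⟨t, ht⟩ ⟨t', ht'⟩ hts
      simp only [Subtype.mk.injEq] at hts
      have hz : Ideal.Quotient.mk IB (C 0 + C (t - t') * X) = 0 := by
        rw [show (C 0 + C (t - t') * X : R[X]) = (C t * X) - (C t' * X) by
          rw [C_sub, C_0]; ring, map_sub, hts, sub_self]
      exact Subtype.ext (sub_eq_zero.mp (ind_aux p hz).2)
    · rintro ⟨x, hx⟩
      obtain ⟨t, ht, hxt⟩ := (Jset_aux p ℓ hℓ hap x).mp hx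
      exact ⟨⟨t, ht⟩, Subtype.ext hxt.symm⟩
  have hcardA : Nat.card (Aext R p ℓ) = q ^ (2 * ℓ - 1) := by
    have h1 : Nat.card (Aext R p ℓ) = Nat.card ((R[X] ⧸ IB) ⧸ JB) := Nat.card_congr e.toEquiv
    have h2 := card_quot_aux JB
    rw [hcardB, hcardJB, ← h1] at h2
    have h3 : q ^ ℓ * q ^ ℓ = q ^ (2 * ℓ - 1) * q := by
      rw [← pow_add, ← pow_succ]
      congr 1
      omega
    rw [h3] at h2
    exact Nat.eq_of_mul_eq_mul_right hqpos h2.symm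
  -- powers of piA
  have hpi_pow : ∀ n : ℕ, (piA R p ℓ) ^ n =
      Ideal.Quotient.mk (Ideal.span ({X ^ 2 - C p, X ^ (2 * ℓ - 1)} : Set R[X])) (X ^ n) := by
    intro n
    rw [piA, ← map_pow]
  have hpi0 : (piA R p ℓ) ^ (2 * ℓ - 1) = 0 := by
    rw [hpi_pow, Ideal.Quotient.eq_zero_iff_mem]
    exact Ideal.subset_span (Set.mem_insert_of_mem _ rfl)
  have hbot : Ideal.span {piA R p ℓ} ^ (2 * ℓ - 1) = (⊥ : Ideal (Aext R p ℓ)) := by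
    rw [Ideal.span_singleton_pow, hpi0, Ideal.span_singleton_eq_bot]
  have hnbot : Ideal.span {piA R p ℓ} ^ (2 * ℓ - 2) ≠ (⊥ : Ideal (Aext R p ℓ)) := by
    rw [Ideal.span_singleton_pow, Ne, Ideal.span_singleton_eq_bot]
    intro h0
    rw [hpi_pow] at h0
    have h1 : Ideal.Quotient.mk JB (Ideal.Quotient.mk IB (X ^ (2 * ℓ - 2))) = 0 := by
      rw [← he, h0, map_zero]
    have h2 : Ideal.Quotient.mk IB (X ^ (2 * ℓ - 2)) =
        Ideal.Quotient.mk IB (C (p ^ (ℓ - 1))) := by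
      rw [show 2 * ℓ - 2 = 2 * (ℓ - 1) by omega, pow_mul, map_pow, sq_aux p, ← map_pow]
      congr 1
      rw [← C_pow]
    rw [h2, Ideal.Quotient.eq_zero_iff_mem] at h1
    obtain ⟨t, ht, hxt⟩ := (Jset_aux p ℓ hℓ hap _).mp h1
    have hz : Ideal.Quotient.mk IB (C (p ^ (ℓ - 1)) + C (-t) * X) = 0 := by
      rw [show (C (p ^ (ℓ - 1)) + C (-t) * X : R[X]) = C (p ^ (ℓ - 1)) - C t * X by
        rw [C_neg]; ring, map_sub, hxt, sub_self]
    exact hpl1 (ind_aux p hz).1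
  -- maximality
  have hpiA_span : Ideal.span {piA R p ℓ} =
      Ideal.map (Ideal.Quotient.mk (Ideal.span ({X ^ 2 - C p, X ^ (2 * ℓ - 1)} : Set R[X])))
        (Ideal.span {(X : R[X])}) := by
    rw [Ideal.map_span, Set.image_singleton]
    rfl
  have hsupX : Ideal.span ({X ^ 2 - C p, X ^ (2 * ℓ - 1)} : Set R[X]) ⊔
      Ideal.span {(X : R[X])} = Ideal.span ({C p, X - C 0} : Set R[X]) := by
    have hX : (X : R[X]) ∈ Ideal.span ({C p, X - C 0} : Set R[X]) := by
      refine Ideal.subset_span ?_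
      rw [C_0, sub_zero]
      exact Set.mem_insert_of_mem _ rfl
    apply le_antisymm
    · refine sup_le (Ideal.span_le.mpr ?_) (Ideal.span_le.mpr ?_)
      · rintro f (rfl | rfl)
        · exact sub_mem (Ideal.pow_mem_of_mem _ hX 2 (by norm_num))
            (Ideal.subset_span (Set.mem_insert _ _))
        · exact Ideal.pow_mem_of_mem _ hX (2 * ℓ - 1) (by omega)
      · rintro f rfl
        exact hX
    · refine Ideal.span_le.mpr ?_
      rintro f (rfl | rfl)
      · have hf0 : (X ^ 2 - C p : R[X]) ∈
            Ideal.span ({X ^ 2 - C p, X ^ (2 * ℓ - 1)} : Set R[X]) ⊔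
            Ideal.span {(X : R[X])} :=
          Ideal.mem_sup_left (Ideal.subset_span (Set.mem_insert _ _))
        have hXm : (X : R[X]) ∈
            Ideal.span ({X ^ 2 - C p, X ^ (2 * ℓ - 1)} : Set R[X]) ⊔
            Ideal.span {(X : R[X])} :=
          Ideal.mem_sup_right (Ideal.subset_span rfl)
        have hX2 : (X ^ 2 : R[X]) ∈
            Ideal.span ({X ^ 2 - C p, X ^ (2 * ℓ - 1)} : Set R[X]) ⊔
            Ideal.span {(X : R[X])} :=
          Ideal.pow_mem_of_mem _ hXm 2 (by norm_num)
        have hsub := sub_mem hX2 hf0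
        simpa using hsub
      · rw [C_0, sub_zero]
        exact Ideal.mem_sup_right (Ideal.subset_span rfl)
  let eres : (Aext R p ℓ ⧸ Ideal.span {piA R p ℓ}) ≃+* R ⧸ Ideal.span {p} :=
    (Ideal.quotEquivOfEq hpiA_span).trans
      ((DoubleQuot.quotQuotEquivQuotSup _ _).trans
        ((Ideal.quotEquivOfEq hsupX).trans
          (Polynomial.quotientSpanCXSubCAlgEquiv p 0).toRingEquiv))
  have hmaxIdp : (Ideal.span {p}).IsMaximal := by
    rw [← hmax]; exact IsLocalRing.maximalIdeal.isMaximal R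
  have hfield : IsField (R ⧸ Ideal.span {p}) :=
    (Ideal.Quotient.maximal_ideal_iff_isField_quotient _).mp hmaxIdp
  have hfieldA : IsField (Aext R p ℓ ⧸ Ideal.span {piA R p ℓ}) :=
    eres.toMulEquiv.isField hfield
  have hmaxA : (Ideal.span {piA R p ℓ}).IsMaximal :=
    Ideal.Quotient.maximal_of_isField _ hfieldA
  have huniq : ∀ I : Ideal (Aext R p ℓ), I.IsMaximal → I = Ideal.span {piA R p ℓ} := by
    intro I hI
    have hmem : piA R p ℓ ∈ I := hI.isPrime.mem_of_pow_mem _ (hpi0 ▸ I.zero_mem)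
    exact ((hmaxA.eq_of_le hI.ne_top (Ideal.span_le.mpr (by simpa using hmem)))).symm
  have hlocal : IsLocalRing (Aext R p ℓ) :=
    IsLocalRing.of_unique_max_ideal ⟨_, hmaxA, huniq⟩
  exact ⟨hFinA, hlocal, hmaxA, huniq, hbot, hnbot, hcardA, hcardR⟩
end
end

section
/- Let N = {a ∈ A^× : a a* = 1} be the kernel of the norm map A^× → R^×, a ↦ a a*. Then |N| = 2|A|/|R| = 2 q^{ℓ-1}. -/
set_option linter.unusedSectionVars false
set_option maxHeartbeats 1000000

open Polynomial

noncomputable section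

section AuxR
open IsLocalRing

section Rfacts
variable {R : Type} [CommRing R] [IsLocalRing R]
variable {p : R} {ℓ : ℕ}

lemma aux_unit_one_add {x : R} (h : x ∈ maximalIdeal R) : IsUnit (1 + x) := by
  by_contra hu
  have h1 : (1:R) + x ∈ maximalIdeal R := by rwa [mem_maximalIdeal, mem_nonunits_iff]
  have : (1:R) ∈ maximalIdeal R := by simpa using Ideal.sub_mem _ h1 h
  exact (maximalIdeal.isMaximal R).ne_top (Ideal.eq_top_of_isUnit_mem _ this isUnit_one)

lemma aux_pow_ell (hnil : Ideal.span {p} ^ ℓ = ⊥) : p ^ ℓ = 0 := by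
  have := Ideal.pow_mem_pow (Ideal.mem_span_singleton_self p) ℓ
  rw [hnil] at this; simpa using this

lemma aux_exists_unit_pow (hmax : maximalIdeal R = Ideal.span {p})
    (hnil : Ideal.span {p} ^ ℓ = ⊥) (x : R) :
    ∃ (u : Rˣ) (k : ℕ), k ≤ ℓ ∧ x = (u : R) * p ^ k := by
  have key : ∀ n : ℕ, ∀ x : R, x ∈ Ideal.span {p} ^ (ℓ - n) →
      ∃ (u : Rˣ) (k : ℕ), k ≤ ℓ ∧ x = (u : R) * p ^ k := by
    intro n
    induction n with
    | zero =>
      intro x hx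
      rw [Nat.sub_zero, hnil, Ideal.mem_bot] at hx
      exact ⟨1, ℓ, le_rfl, by simp [hx, aux_pow_ell hnil]⟩
    | succ n ih =>
      intro x hx
      rcases le_or_gt ℓ n with hn | hn
      · have h1 : ℓ - (n+1) = ℓ - n := by omega
        exact ih x (h1 ▸ hx)
      · have he : ℓ - (n+1) + 1 = ℓ - n := by omega
        rw [Ideal.span_singleton_pow, Ideal.mem_span_singleton] at hx
        obtain ⟨y, hy⟩ := hx
        by_cases hu : IsUnit y
        · obtain ⟨u, rfl⟩ := hu
          exact ⟨u, ℓ - (n+1), by omega, by rw [hy, mul_comm]⟩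
        · apply ih x
          have hy' : y ∈ Ideal.span {p} := by
            rw [← hmax, mem_maximalIdeal]; exact hu
          rw [Ideal.mem_span_singleton] at hy'
          obtain ⟨z, hz⟩ := hy'
          rw [Ideal.span_singleton_pow, Ideal.mem_span_singleton]
          exact ⟨z, by rw [hy, hz, ← he, pow_succ]; ring⟩
  have : x ∈ Ideal.span {p} ^ (ℓ - ℓ) := by simp
  exact key ℓ x this

lemma aux_pow_zero_iff (hnil : Ideal.span {p} ^ ℓ = ⊥)
    (hnil' : Ideal.span {p} ^ (ℓ - 1) ≠ ⊥) {m : ℕ} : p ^ m = 0 ↔ ℓ ≤ m := by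
  constructor
  · intro h
    by_contra hm
    apply hnil'
    rw [Ideal.span_singleton_pow, Ideal.span_singleton_eq_bot]
    have : ℓ - 1 = m + (ℓ - 1 - m) := by omega
    rw [this, pow_add, h, zero_mul]
  · intro h
    have : m = ℓ + (m - ℓ) := by omega
    rw [this, pow_add, aux_pow_ell hnil, zero_mul]

-- p^k * x ∈ (p^{k+1}) → x ∈ (p), for k+1 ≤ ℓ
lemma aux_cancel (hmax : maximalIdeal R = Ideal.span {p})
    (hnil : Ideal.span {p} ^ ℓ = ⊥) (hnil' : Ideal.span {p} ^ (ℓ - 1) ≠ ⊥)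
    {k : ℕ} (hk : k + 1 ≤ ℓ) {x : R} (h : p ^ k * x ∈ Ideal.span {p ^ (k+1)}) :
    x ∈ Ideal.span {p} := by
  obtain ⟨u, j, hj, rfl⟩ := aux_exists_unit_pow hmax hnil x
  rcases Nat.eq_zero_or_pos j with hj0 | hj0
  · subst hj0
    simp only [pow_zero, mul_one] at h ⊢
    rw [Ideal.mem_span_singleton] at h
    obtain ⟨c, hc⟩ := h
    have hc' : p ^ k * (1 - p * (c * (u⁻¹ : Rˣ))) = 0 := by
      have : (u:R) * (u⁻¹ : Rˣ) = 1 := by exact_mod_cast Units.mul_inv u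
      have h2 : p ^ k * (u:R) * ((u⁻¹:Rˣ) : R) = p ^ (k+1) * c * ((u⁻¹:Rˣ):R) := by rw [hc]
      calc p ^ k * (1 - p * (c * (u⁻¹ : Rˣ))) 
          = p ^ k * (u:R) * ((u⁻¹:Rˣ):R) - p^(k+1) * c * ((u⁻¹:Rˣ):R) := by
            rw [mul_assoc (p^k), this]; ring
        _ = 0 := by rw [h2]; ring
    have hunit : IsUnit (1 - p * (c * (u⁻¹ : Rˣ))) := by
      have : -(p * (c * (u⁻¹ : Rˣ))) ∈ maximalIdeal R := by
        rw [hmax]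
        exact neg_mem (Ideal.mul_mem_right _ _ (Ideal.mem_span_singleton_self p))
      simpa [sub_eq_add_neg] using aux_unit_one_add this
    have : p ^ k = 0 := by
      obtain ⟨v, hv⟩ := hunit
      have := congrArg (· * ((v⁻¹ : Rˣ) : R)) hc'
      simp only [zero_mul] at this
      rw [mul_assoc, ← hv] at this
      simpa [Units.mul_inv_cancel_right] using this
    have := (aux_pow_zero_iff hnil hnil').mp this
    omega
  · exact Ideal.mul_mem_left _ _ (by
      rw [Ideal.mem_span_singleton]
      exact ⟨p ^ (j-1), by rw [← pow_succ']; congr 1; omega⟩)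

end Rfacts

lemma aux_card_hom {M N : Type} [AddCommGroup M] [AddCommGroup N] (φ : M →+ N) :
    Nat.card M = Nat.card φ.range * Nat.card φ.ker := by
  rw [AddSubgroup.card_eq_card_quotient_mul_card_addSubgroup φ.ker]
  congr 1
  exact Nat.card_congr (QuotientAddGroup.quotientKerEquivRange φ).toEquiv

lemma aux_card_hom_surj {M N : Type} [AddCommGroup M] [AddCommGroup N] (φ : M →+ N)
    (h : Function.Surjective φ) :
    Nat.card M = Nat.card N * Nat.card φ.ker := by
  rw [aux_card_hom φ]
  congr 1
  have : φ.range = ⊤ := AddMonoidHom.range_eq_top.mpr h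
  rw [this]
  exact Nat.card_congr AddSubgroup.topEquiv.toEquiv

section Card
variable {R : Type} [CommRing R] [IsLocalRing R] [Finite R]
variable {p : R} {ℓ q : ℕ}

lemma aux_card_res (hmax : maximalIdeal R = Ideal.span {p})
    (hq : Nat.card (ResidueField R) = q) :
    Nat.card (R ⧸ Ideal.span {p}) = q := by
  rw [← hq]
  exact Nat.card_congr (Ideal.quotEquivOfEq hmax.symm).toEquiv

lemma aux_card_quot (hmax : maximalIdeal R = Ideal.span {p})
    (hnil : Ideal.span {p} ^ ℓ = ⊥) (hnil' : Ideal.span {p} ^ (ℓ - 1) ≠ ⊥)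
    (hq : Nat.card (ResidueField R) = q) :
    ∀ k, k ≤ ℓ → Nat.card (R ⧸ Ideal.span {p} ^ k) = q ^ k := by
  intro k
  induction k with
  | zero =>
    intro _
    have h0 : (Ideal.span {p} ^ 0 : Ideal R) = ⊤ := by rw [pow_zero, Ideal.one_eq_top]
    have hs : Subsingleton (R ⧸ (Ideal.span {p} ^ 0 : Ideal R)) :=
      Ideal.Quotient.subsingleton_iff.mpr h0
    have := @Nat.card_of_subsingleton _ (0 : R ⧸ (Ideal.span {p} ^ 0 : Ideal R)) hs
    simpa using this
  | succ k ih =>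
    intro hk
    have hk' : k ≤ ℓ := by omega
    set I : Ideal R := Ideal.span {p} ^ (k+1) with hI
    set J : Ideal R := Ideal.span {p} ^ k with hJ
    have hIJ : I ≤ J := Ideal.pow_le_pow_right (by omega)
    set f : R ⧸ I →+* R ⧸ J := Ideal.Quotient.factor hIJ with hf
    have hfs : Function.Surjective f := by
      intro z
      obtain ⟨w, rfl⟩ := Ideal.Quotient.mk_surjective z
      exact ⟨Ideal.Quotient.mk I w, Ideal.Quotient.factor_mk hIJ w⟩
    -- ψ : multiplication by p^k then mk I
    set ψ : R →+ R ⧸ I :=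
      (Ideal.Quotient.mk I).toAddMonoidHom.comp (AddMonoidHom.mulLeft (p ^ k)) with hψ
    have hrange : ψ.range = f.toAddMonoidHom.ker := by
      ext z
      constructor
      · rintro ⟨x, rfl⟩
        show f (Ideal.Quotient.mk I (p ^ k * x)) = 0
        rw [hf, Ideal.Quotient.factor_mk hIJ, Ideal.Quotient.eq_zero_iff_mem, hJ,
          Ideal.span_singleton_pow, Ideal.mem_span_singleton]
        exact ⟨x, rfl⟩
      · intro hz
        obtain ⟨w, rfl⟩ := Ideal.Quotient.mk_surjective z
        have : f (Ideal.Quotient.mk I w) = 0 := hz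
        rw [hf, Ideal.Quotient.factor_mk hIJ, Ideal.Quotient.eq_zero_iff_mem, hJ,
          Ideal.span_singleton_pow, Ideal.mem_span_singleton] at this
        obtain ⟨x, hx⟩ := this
        exact ⟨x, by simp [ψ, hx]⟩
    have hker : ψ.ker = (Ideal.span {p}).toAddSubgroup := by
      ext x
      show Ideal.Quotient.mk I (p ^ k * x) = 0 ↔ x ∈ Ideal.span {p}
      rw [Ideal.Quotient.eq_zero_iff_mem, hI, Ideal.span_singleton_pow]
      constructor
      · exact fun h => aux_cancel hmax hnil hnil' hk h
      · rw [Ideal.mem_span_singleton]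
        rintro ⟨y, rfl⟩
        rw [Ideal.mem_span_singleton]
        exact ⟨y, by ring⟩
    have hker_mk : ((Ideal.Quotient.mk (Ideal.span {p})).toAddMonoidHom).ker
        = (Ideal.span {p}).toAddSubgroup := by
      ext x
      exact Ideal.Quotient.eq_zero_iff_mem
    have ha : Nat.card R = q * Nat.card (Ideal.span {p}).toAddSubgroup := by
      have := aux_card_hom_surj (Ideal.Quotient.mk (Ideal.span {p})).toAddMonoidHom
        Ideal.Quotient.mk_surjective
      rwa [hker_mk, aux_card_res hmax hq] at this
    have hb : Nat.card R
        = Nat.card f.toAddMonoidHom.ker * Nat.card (Ideal.span {p}).toAddSubgroup := by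
      have := aux_card_hom ψ
      rwa [hrange, hker] at this
    have ht : Nat.card (Ideal.span {p}).toAddSubgroup ≠ 0 := Nat.card_pos.ne'
    have hq' : Nat.card f.toAddMonoidHom.ker = q :=
      Nat.eq_of_mul_eq_mul_right (Nat.pos_of_ne_zero ht) (hb.symm.trans ha)
    have hc : Nat.card (R ⧸ I) = Nat.card (R ⧸ J) * Nat.card f.toAddMonoidHom.ker :=
      aux_card_hom_surj f.toAddMonoidHom hfs
    rw [hc, hq', ih hk', pow_succ]

end Card


section Units5
variable {R : Type} [CommRing R] [IsLocalRing R] [Finite R]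
variable {p : R} {q : ℕ}

lemma aux_two_unit (hq : Nat.card (ResidueField R) = q) (hodd : Odd q) : IsUnit (2:R) := by
  rw [← notMem_maximalIdeal]
  intro h2
  have hres : (2 : ResidueField R) = 0 := by
    have : residue R (2:R) = 0 := (Ideal.Quotient.eq_zero_iff_mem).mpr h2
    rwa [map_ofNat] at this
  have h1 : (2:ℕ) • (1 : ResidueField R) = 0 := by
    rw [nsmul_eq_mul, mul_one, Nat.cast_ofNat]
    exact hres
  have horder : addOrderOf (1 : ResidueField R) = 2 :=
    addOrderOf_eq_prime h1 one_ne_zero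
  have hdvd : 2 ∣ q := by
    rw [← hq, ← horder]
    exact addOrderOf_dvd_natCard _
  rw [Nat.odd_iff] at hodd
  omega

lemma aux_sq_eq_one_iff (h2 : IsUnit (2:R)) {x : R} : x ^ 2 = 1 ↔ x = 1 ∨ x = -1 := by
  constructor
  · intro h
    have h0 : (x - 1) * (x + 1) = 0 := by linear_combination h
    have hx : IsUnit x := IsUnit.of_mul_eq_one (a := x) x (by linear_combination h)
    have hsum : IsUnit ((x - 1) + (x + 1)) := by
      have he : (x - 1) + (x + 1) = 2 * x := by ring
      rw [he]
      exact h2.mul hx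
    rcases IsLocalRing.isUnit_or_isUnit_of_isUnit_add hsum with hu | hu
    · right
      have hc : x + 1 = 0 := hu.mul_left_cancel (by rw [mul_zero]; exact h0)
      linear_combination hc
    · left
      have h0' : (x + 1) * (x - 1) = 0 := by linear_combination h
      have hc : x - 1 = 0 := hu.mul_left_cancel (by rw [mul_zero]; exact h0')
      linear_combination hc
  · rintro (rfl | rfl) <;> ring

lemma aux_card_sq_one (h2 : IsUnit (2:R)) : Nat.card {x : R // x ^ 2 = 1} = 2 := by
  have hset : {x : R | x ^ 2 = 1} = {1, -1} := by
    ext x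
    simp only [Set.mem_setOf_eq, Set.mem_insert_iff, Set.mem_singleton_iff]
    exact aux_sq_eq_one_iff h2
  have hne : (1:R) ≠ -1 := by
    intro h
    have : (2:R) = 0 := by linear_combination h
    rw [this] at h2
    exact one_ne_zero (isUnit_zero_iff.mp h2).symm
  have : Nat.card {x : R // x ^ 2 = 1} = ({1, -1} : Set R).ncard := by
    rw [← hset]
    rfl
  rw [this, Set.ncard_pair hne]

-- the subgroup 1 + pR of units
lemma aux_sqrt_exists (hmax : maximalIdeal R = Ideal.span {p}) (h2 : IsUnit (2:R)) :
    ∀ b : R, ∃ s : R, IsUnit s ∧ s ^ 2 = 1 + p * b ^ 2 ∧ s - 1 ∈ Ideal.span {p} := by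
  set G : Subgroup Rˣ :=
    MonoidHom.ker (Units.map (Ideal.Quotient.mk (Ideal.span {p})).toMonoidHom) with hG
  have memG : ∀ u : Rˣ, u ∈ G ↔ (u : R) - 1 ∈ Ideal.span {p} := by
    intro u
    rw [hG, MonoidHom.mem_ker, Units.ext_iff]
    show Ideal.Quotient.mk (Ideal.span {p}) (u : R) = 1 ↔ _
    rw [show (1 : R ⧸ Ideal.span {p}) = Ideal.Quotient.mk (Ideal.span {p}) 1 from (map_one _).symm]
    exact Ideal.Quotient.mk_eq_mk_iff_sub_mem _ _
  have hinj : Function.Injective (fun g : G => g ^ 2) := by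
    intro g h hgh
    simp only [Subtype.ext_iff, SubmonoidClass.coe_pow] at hgh
    have hone : ((g : Rˣ) * (h : Rˣ)⁻¹) ^ 2 = 1 := by
      rw [mul_pow, hgh]
      group
    have hRone : (((g : Rˣ) * (h : Rˣ)⁻¹ : Rˣ) : R) ^ 2 = 1 := by
      rw [← Units.val_pow_eq_pow_val, hone, Units.val_one]
    rcases (aux_sq_eq_one_iff h2).mp hRone with h1 | h1
    · have : (g : Rˣ) * (h : Rˣ)⁻¹ = 1 := Units.ext h1
      exact Subtype.ext (mul_inv_eq_one.mp this)
    · exfalso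
      have hmem : ((g : Rˣ) * (h : Rˣ)⁻¹) ∈ G := mul_mem g.2 (inv_mem h.2)
      rw [memG, h1] at hmem
      have h2m : (1:R) + 1 ∈ Ideal.span {p} := by simpa using neg_mem hmem
      have : (2:R) ∈ Ideal.span {p} := by
        rw [show (2:R) = 1 + 1 by norm_num]
        exact h2m
      rw [← hmax, mem_maximalIdeal, mem_nonunits_iff] at this
      exact this h2
  have hsurj : Function.Surjective (fun g : G => g ^ 2) :=
    Finite.surjective_of_injective hinj
  intro b
  have hcu : IsUnit (1 + p * b ^ 2) := by
    apply aux_unit_one_add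
    rw [hmax]
    exact Ideal.mul_mem_right _ _ (Ideal.mem_span_singleton_self p)
  have hcmem : hcu.unit ∈ G := by
    rw [memG, hcu.unit_spec]
    have : (1 : R) + p * b ^ 2 - 1 = p * b ^ 2 := by ring
    rw [this]
    exact Ideal.mul_mem_right _ _ (Ideal.mem_span_singleton_self p)
  obtain ⟨g, hg⟩ := hsurj ⟨hcu.unit, hcmem⟩
  refine ⟨((g : Rˣ) : R), Units.isUnit _, ?_, (memG _).mp g.2⟩
  have := congrArg (fun z : G => ((z : Rˣ) : R)) hg
  simp only [SubmonoidClass.coe_pow, Units.val_pow_eq_pow_val] at this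
  rw [this, hcu.unit_spec]

end Units5

end AuxR


variable (R : Type) [CommRing R] [IsLocalRing R] [IsPrincipalIdealRing R] [Finite R]
variable (p : R) (ℓ q : ℕ)

-- auxiliary defs
abbrev Iaux : Ideal (Polynomial R) :=
  Ideal.span ({X ^ 2 - C p, X ^ (2 * ℓ - 1)} : Set (Polynomial R))

def phiA (a b : R) : Aext R p ℓ :=
  Ideal.Quotient.mk (Iaux R p ℓ) (C a + C b * X)

lemma phiA_eq (a b : R) :
    phiA R p ℓ a b
      = algebraMap R (Aext R p ℓ) a + algebraMap R (Aext R p ℓ) b * piA R p ℓ := rfl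

lemma m_mem : X ^ 2 - C p ∈ Iaux R p ℓ :=
  Ideal.subset_span (Set.mem_insert _ _)

lemma m_monic : (X ^ 2 - C p).Monic :=
  Polynomial.monic_X_pow_sub_C p (by norm_num)

lemma span_eq (hℓ : 1 ≤ ℓ) :
    Iaux R p ℓ = Ideal.span ({X ^ 2 - C p, C (p ^ (ℓ - 1)) * X} : Set (Polynomial R)) := by
  obtain ⟨h, hh⟩ := sub_dvd_pow_sub_pow (X ^ 2) (C p) (ℓ - 1)
  have hCp : (C p) ^ (ℓ - 1) = C (p ^ (ℓ - 1)) := by rw [map_pow]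
  have hX : X ^ (2 * ℓ - 1) = (X ^ 2 - C p) * (h * X) + C (p ^ (ℓ - 1)) * X := by
    have h2 : 2 * ℓ - 1 = 2 * (ℓ - 1) + 1 := by omega
    rw [h2, pow_succ, pow_mul]
    rw [hCp] at hh
    linear_combination X * hh
  apply le_antisymm
  · rw [Iaux, Ideal.span_le]
    rintro f (rfl | rfl)
    · exact Ideal.subset_span (Set.mem_insert _ _)
    · rw [SetLike.mem_coe, Ideal.mem_span_pair]
      exact ⟨h * X, 1, by rw [one_mul]; linear_combination -hX⟩
  · rw [Ideal.span_le]
    rintro f (rfl | rfl)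
    · exact Ideal.subset_span (Set.mem_insert _ _)
    · rw [SetLike.mem_coe, Iaux, Ideal.mem_span_pair]
      exact ⟨-(h * X), 1, by rw [one_mul]; linear_combination hX⟩

lemma phiA_surj (z : Aext R p ℓ) : ∃ a b : R, z = phiA R p ℓ a b := by
  obtain ⟨f, rfl⟩ := Ideal.Quotient.mk_surjective z
  set m : Polynomial R := X ^ 2 - C p with hm
  have hmod : f %ₘ m + m * (f /ₘ m) = f := f.modByMonic_add_div m
  have hdeg : (f %ₘ m).degree ≤ 1 := by
    have h2 : m.degree = 2 := by
      rw [hm]; exact Polynomial.degree_X_pow_sub_C (by norm_num) p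
    have := Polynomial.degree_modByMonic_lt f (m_monic R p)
    rw [← hm, h2] at this
    exact Order.le_of_lt_succ this
  refine ⟨(f %ₘ m).coeff 0, (f %ₘ m).coeff 1, ?_⟩
  rw [phiA]
  rw [Ideal.Quotient.mk_eq_mk_iff_sub_mem]
  have : f - (C ((f %ₘ m).coeff 0) + C ((f %ₘ m).coeff 1) * X)
      = m * (f /ₘ m) + (f %ₘ m - (C ((f %ₘ m).coeff 1) * X + C ((f %ₘ m).coeff 0))) := by
    linear_combination -hmod
  rw [this, ← Polynomial.eq_X_add_C_of_degree_le_one hdeg, sub_self, add_zero]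
  exact Ideal.mul_mem_right _ _ (m_mem R p ℓ)

lemma phiA_zero_iff (hℓ : 1 ≤ ℓ) (hp : p ^ ℓ = 0) (a b : R) :
    phiA R p ℓ a b = 0 ↔ a = 0 ∧ b ∈ Ideal.span {p ^ (ℓ - 1)} := by
  constructor
  · intro hz
    rw [phiA, Ideal.Quotient.eq_zero_iff_mem, span_eq R p ℓ hℓ, Ideal.mem_span_pair] at hz
    obtain ⟨F, G, hFG⟩ := hz
    set m : Polynomial R := X ^ 2 - C p with hm
    set G' := G %ₘ m with hG'
    have hmod : G' + m * (G /ₘ m) = G := G.modByMonic_add_div m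
    have hdeg : G'.degree ≤ 1 := by
      have h2 : m.degree = 2 := by
        rw [hm]; exact Polynomial.degree_X_pow_sub_C (by norm_num) p
      have := Polynomial.degree_modByMonic_lt G (m_monic R p)
      rw [← hm, h2] at this
      exact Order.le_of_lt_succ this
    have hG'eq : G' = C (G'.coeff 1) * X + C (G'.coeff 0) :=
      Polynomial.eq_X_add_C_of_degree_le_one hdeg
    set e := ℓ - 1 with he
    have hpe : C p ^ e * C p = 0 := by
      rw [← map_pow, ← map_mul, ← pow_succ]
      have : e + 1 = ℓ := by omega
      rw [this, hp, map_zero]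
    set t : Polynomial R := C (b - p ^ e * (G'.coeff 0)) * X + C a with ht
    have htm : t = m * (F + (G /ₘ m) * (C p ^ e * X) + C p ^ e * C (G'.coeff 1)) := by
      have hFG' : F * m + (C (G'.coeff 1) * X + C (G'.coeff 0) + m * (G /ₘ m)) * (C p ^ e * X)
          = C a + C b * X := by
        rw [← map_pow, ← hG'eq, hmod]; exact hFG
      rw [ht]
      simp only [map_sub, map_mul, map_pow]
      linear_combination -hFG' - X * X * hpe * C (G'.coeff 1) + hpe * (G /ₘ m) * X + hpe * (X ^ 2 * C (G'.coeff 1) + C (G'.coeff 1) - X * (G /ₘ m))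
    have ht0 : t = 0 := by
      by_contra ht0
      have hH : (F + (G /ₘ m) * (C p ^ e * X) + C p ^ e * C (G'.coeff 1)) ≠ 0 := by
        intro h0; rw [h0, mul_zero] at htm; exact ht0 htm
      have hmonic : m.Monic := by rw [hm]; exact m_monic R p
      have hdm : t.degree
          = (F + (G /ₘ m) * (C p ^ e * X) + C p ^ e * C (G'.coeff 1)).degree + m.degree := by
        rw [htm, mul_comm]; exact hmonic.degree_mul
      have h2 : m.degree = 2 := by rw [hm]; exact Polynomial.degree_X_pow_sub_C (by norm_num) p
      have hge : (2 : WithBot ℕ) ≤ t.degree := by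
        rw [hdm, h2]
        have : (0 : WithBot ℕ) ≤ (F + (G /ₘ m) * (C p ^ e * X) + C p ^ e * C (G'.coeff 1)).degree :=
          Polynomial.zero_le_degree_iff.mpr hH
        exact le_add_of_nonneg_left this
      have hle : t.degree ≤ 1 := Polynomial.degree_linear_le
      have := hge.trans hle
      norm_num at this
    have hcoeff0 := congrArg (fun f => Polynomial.coeff f 0) ht0
    have hcoeff1 := congrArg (fun f => Polynomial.coeff f 1) ht0
    simp [ht, Polynomial.coeff_C, ← map_pow] at hcoeff0 hcoeff1
    refine ⟨hcoeff0, ?_⟩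
    rw [Ideal.mem_span_singleton]
    exact ⟨(G'.coeff 0), by rw [← sub_eq_zero]; exact hcoeff1⟩
  · rintro ⟨rfl, hb⟩
    rw [Ideal.mem_span_singleton] at hb
    obtain ⟨c, rfl⟩ := hb
    have heq : C (0:R) + C (p ^ (ℓ - 1) * c) * X = C c * (C (p ^ (ℓ - 1)) * X) := by
      rw [map_zero, map_mul]; ring
    rw [phiA, heq, Ideal.Quotient.eq_zero_iff_mem, span_eq R p ℓ hℓ]
    exact Ideal.mul_mem_left _ _ (Ideal.subset_span (Set.mem_insert_of_mem _ rfl))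

lemma mk_out'' {S : Type} [CommRing S] {I : Ideal S} (y : S ⧸ I) :
    Ideal.Quotient.mk I (Quotient.out y) = y := Quotient.out_eq y

lemma phiA_sub (a b a' b' : R) :
    phiA R p ℓ a b - phiA R p ℓ a' b' = phiA R p ℓ (a - a') (b - b') := by
  rw [phiA, phiA, phiA, ← map_sub]
  congr 1
  rw [map_sub, map_sub]
  ring

lemma phiA_eq_iff (hℓ : 1 ≤ ℓ) (hp : p ^ ℓ = 0) (a b a' b' : R) :
    phiA R p ℓ a b = phiA R p ℓ a' b' ↔ a = a' ∧ b - b' ∈ Ideal.span {p ^ (ℓ - 1)} := by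
  rw [← sub_eq_zero, phiA_sub, phiA_zero_iff R p ℓ hℓ hp, sub_eq_zero]

lemma phiA_mul (a b a' b' : R) :
    phiA R p ℓ a b * phiA R p ℓ a' b'
      = phiA R p ℓ (a * a' + p * b * b') (a * b' + a' * b) := by
  rw [phiA, phiA, phiA, ← map_mul, Ideal.Quotient.mk_eq_mk_iff_sub_mem]
  have : (C a + C b * X) * (C a' + C b' * X)
      - (C (a * a' + p * b * b') + C (a * b' + a' * b) * X)
      = C b * C b' * (X ^ 2 - C p) := by
    simp only [map_add, map_mul]
    ring
  rw [this]
  exact Ideal.mul_mem_left _ _ (m_mem R p ℓ)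

lemma phiA_one : phiA R p ℓ 1 0 = 1 := by
  rw [phiA]; simp

lemma sigma_phiA (σ : Aext R p ℓ →ₐ[R] Aext R p ℓ) (hσ : σ (piA R p ℓ) = - piA R p ℓ)
    (a b : R) : σ (phiA R p ℓ a b) = phiA R p ℓ a (-b) := by
  rw [phiA_eq, map_add, map_mul, AlgHom.commutes, AlgHom.commutes, hσ, phiA_eq, map_neg]
  ring

lemma Aext_finite : Finite (Aext R p ℓ) := by
  have : Function.Surjective (fun ab : R × R => phiA R p ℓ ab.1 ab.2) := by
    intro z
    obtain ⟨a, b, hz⟩ := phiA_surj R p ℓ z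
    exact ⟨(a, b), hz.symm⟩
  exact Finite.of_surjective _ this

lemma Aext_card (hℓ : 1 ≤ ℓ) (hp : p ^ ℓ = 0) :
    Nat.card (Aext R p ℓ)
      = Nat.card R * Nat.card (R ⧸ Ideal.span ({p ^ (ℓ - 1)} : Set R)) := by
  have e : R × (R ⧸ Ideal.span ({p ^ (ℓ - 1)} : Set R)) ≃ Aext R p ℓ := by
    refine Equiv.ofBijective (fun ay => phiA R p ℓ ay.1 (Quotient.out ay.2)) ⟨?_, ?_⟩
    · rintro ⟨a, y⟩ ⟨a', y'⟩ h
      simp only at h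
      rw [phiA_eq_iff R p ℓ hℓ hp] at h
      obtain ⟨rfl, hy⟩ := h
      have : Ideal.Quotient.mk (Ideal.span ({p ^ (ℓ - 1)} : Set R)) (Quotient.out y)
          = Ideal.Quotient.mk _ (Quotient.out y') :=
        (Ideal.Quotient.mk_eq_mk_iff_sub_mem _ _).mpr hy
      rw [mk_out'', mk_out''] at this
      rw [Prod.mk.injEq]
      exact ⟨rfl, this⟩
    · intro z
      obtain ⟨a, b, rfl⟩ := phiA_surj R p ℓ z
      refine ⟨(a, Ideal.Quotient.mk _ b), ?_⟩
      simp only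
      rw [phiA_eq_iff R p ℓ hℓ hp]
      refine ⟨rfl, ?_⟩
      rw [← Ideal.Quotient.mk_eq_mk_iff_sub_mem, mk_out'']
  rw [← Nat.card_congr e, Nat.card_prod]


theorem stmt4
    (hℓ : 1 ≤ ℓ)
    (hmax : IsLocalRing.maximalIdeal R = Ideal.span {p})
    (hnil : Ideal.span {p} ^ ℓ = (⊥ : Ideal R))
    (hnil' : Ideal.span {p} ^ (ℓ - 1) ≠ (⊥ : Ideal R))
    (hq : Nat.card (IsLocalRing.ResidueField R) = q)
    (hodd : Odd q)
    (σ : Aext R p ℓ →ₐ[R] Aext R p ℓ)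
    (hσ : σ (piA R p ℓ) = - piA R p ℓ) :
    Nat.card {a : (Aext R p ℓ)ˣ // (a : Aext R p ℓ) * σ (a : Aext R p ℓ) = 1} * Nat.card R =
      2 * Nat.card (Aext R p ℓ) ∧
    Nat.card {a : (Aext R p ℓ)ˣ // (a : Aext R p ℓ) * σ (a : Aext R p ℓ) = 1} =
      2 * q ^ (ℓ - 1) := by
  classical
  have hp : p ^ ℓ = 0 := aux_pow_ell hnil
  have h2 : IsUnit (2:R) := aux_two_unit hq hodd
  have hAfin : Finite (Aext R p ℓ) := Aext_finite R p ℓ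
  choose sfun hs_unit hs_sq hs_mem using aux_sqrt_exists hmax h2
  set Q := R ⧸ Ideal.span ({p ^ (ℓ - 1)} : Set R) with hQ
  set S := {a : (Aext R p ℓ)ˣ // (a : Aext R p ℓ) * σ (a : Aext R p ℓ) = 1} with hS
  -- the norm-one property of the elements we construct
  have key : ∀ (ε : {x : R // x ^ 2 = 1}) (y : Q),
      phiA R p ℓ (ε.1 * sfun (Quotient.out y)) (Quotient.out y)
        * σ (phiA R p ℓ (ε.1 * sfun (Quotient.out y)) (Quotient.out y)) = 1 := by
    intro ε y
    set b := Quotient.out y with hb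
    rw [sigma_phiA R p ℓ σ hσ, phiA_mul]
    have e1 : ε.1 * sfun b * (ε.1 * sfun b) + p * b * (-b) = 1 := by
      linear_combination ε.1 ^ 2 * hs_sq b + (1 + p * b ^ 2) * ε.2
    have e2 : ε.1 * sfun b * (-b) + (ε.1 * sfun b) * b = 0 := by ring
    rw [e1, e2, phiA_one]
  -- the bijection
  set F : {x : R // x ^ 2 = 1} × Q → S := fun εy =>
    ⟨Units.mkOfMulEqOne _ _ (key εy.1 εy.2), key εy.1 εy.2⟩ with hF
  have hFinj : Function.Injective F := by
    rintro ⟨ε, y⟩ ⟨ε', y'⟩ h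
    have hval : phiA R p ℓ (ε.1 * sfun (Quotient.out y)) (Quotient.out y)
        = phiA R p ℓ (ε'.1 * sfun (Quotient.out y')) (Quotient.out y') := by
      have := congrArg (fun z : S => ((z : (Aext R p ℓ)ˣ) : Aext R p ℓ)) h
      simpa [hF] using this
    rw [phiA_eq_iff R p ℓ hℓ hp] at hval
    obtain ⟨he, hy⟩ := hval
    have hyy : y = y' := by
      have : Ideal.Quotient.mk (Ideal.span ({p ^ (ℓ - 1)} : Set R)) (Quotient.out y)
          = Ideal.Quotient.mk _ (Quotient.out y') :=
        (Ideal.Quotient.mk_eq_mk_iff_sub_mem _ _).mpr hy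
      rwa [mk_out'', mk_out''] at this
    subst hyy
    have hεε : ε = ε' := by
      have hcomm : sfun (Quotient.out y) * ε.1 = sfun (Quotient.out y) * ε'.1 := by
        linear_combination he
      exact Subtype.ext ((hs_unit (Quotient.out y)).mul_left_cancel hcomm)
    rw [hεε]
  have hFsurj : Function.Surjective F := by
    rintro ⟨zu, hz⟩
    obtain ⟨a, b, hab⟩ := phiA_surj R p ℓ ((zu : (Aext R p ℓ)ˣ) : Aext R p ℓ)
    set y : Q := Ideal.Quotient.mk _ b with hy
    set b' := Quotient.out y with hb'
    have hbb' : b - b' ∈ Ideal.span ({p ^ (ℓ - 1)} : Set R) := by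
      rw [← Ideal.Quotient.mk_eq_mk_iff_sub_mem]
      rw [hb', mk_out'', hy]
    have hab' : ((zu : (Aext R p ℓ)ˣ) : Aext R p ℓ) = phiA R p ℓ a b' := by
      rw [hab, phiA_eq_iff R p ℓ hℓ hp]
      exact ⟨rfl, hbb'⟩
    -- derive the norm equation
    have hnorm : phiA R p ℓ (a * a + p * b' * (-b')) (a * (-b') + a * b') = phiA R p ℓ 1 0 := by
      rw [← phiA_mul, ← sigma_phiA R p ℓ σ hσ, ← hab', phiA_one]
      exact hz
    rw [phiA_eq_iff R p ℓ hℓ hp] at hnorm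
    have ha2 : a ^ 2 = 1 + p * b' ^ 2 := by linear_combination hnorm.1
    set s := sfun b' with hs
    set u := (hs_unit b').unit with hu
    have huv : (u : R) = s := (hs_unit b').unit_spec
    have hv : ((u⁻¹ : Rˣ) : R) * s = 1 := by rw [← huv, Units.inv_mul]
    have hsa : s ^ 2 = a ^ 2 := by rw [hs_sq b', ha2]
    set ε := a * ((u⁻¹ : Rˣ) : R) with hε
    have hε2 : ε ^ 2 = 1 := by
      rw [hε]
      linear_combination (-(((u⁻¹ : Rˣ) : R)) ^ 2) * hsa + (((u⁻¹ : Rˣ) : R) * s + 1) * hv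
    have hεs : ε * s = a := by
      rw [hε]
      linear_combination a * hv
    refine ⟨(⟨ε, hε2⟩, y), ?_⟩
    apply Subtype.ext
    apply Units.ext
    show phiA R p ℓ (ε * sfun (Quotient.out y)) (Quotient.out y) = ((zu : (Aext R p ℓ)ˣ) : Aext R p ℓ)
    rw [← hb', ← hs, hεs, hab']
  -- cardinalities
  have cardQ : Nat.card Q = q ^ (ℓ - 1) := by
    have h := aux_card_quot hmax hnil hnil' hq (ℓ - 1) (by omega)
    rwa [Ideal.span_singleton_pow] at h
  have cardS : Nat.card S = 2 * q ^ (ℓ - 1) := by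
    rw [← Nat.card_congr (Equiv.ofBijective F ⟨hFinj, hFsurj⟩), Nat.card_prod,
      aux_card_sq_one h2, cardQ]
  have cardA : Nat.card (Aext R p ℓ) = Nat.card R * Nat.card Q :=
    Aext_card R p ℓ hℓ hp
  constructor
  · rw [show Nat.card {a : (Aext R p ℓ)ˣ // (a : Aext R p ℓ) * σ (a : Aext R p ℓ) = 1}
        = Nat.card S from rfl, cardS, cardA, cardQ]
    ring
  · rw [show Nat.card {a : (Aext R p ℓ)ˣ // (a : Aext R p ℓ) * σ (a : Aext R p ℓ) = 1}
        = Nat.card S from rfl, cardS]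
end
end

section
/- If ℓ > 1 and V is a nonzero finitely generated free A-module, then V is not a free R-module. -/
open Polynomial

noncomputable section

variable (R : Type) [CommRing R] [IsLocalRing R] [IsPrincipalIdealRing R] [Finite R]
variable (p : R) (ℓ q : ℕ)

theorem stmt6
    (hℓ : 1 ≤ ℓ)
    (hmax : IsLocalRing.maximalIdeal R = Ideal.span {p})
    (hnil : Ideal.span {p} ^ ℓ = (⊥ : Ideal R))
    (hnil' : Ideal.span {p} ^ (ℓ - 1) ≠ (⊥ : Ideal R))
    (hq : Nat.card (IsLocalRing.ResidueField R) = q)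
    (hodd : Odd q)
    (hℓ1 : 1 < ℓ)
    (V : Type) [AddCommGroup V] [Module (Aext R p ℓ) V] [Module R V]
    [IsScalarTower R (Aext R p ℓ) V]
    [Module.Free (Aext R p ℓ) V] [Module.Finite (Aext R p ℓ) V]
    [Nontrivial V] :
    ¬ Module.Free R V := by
  intro hfree
  classical
  -- the detecting algebra hom φ : A → k[ε]
  set k := IsLocalRing.ResidueField R with hk
  set f : Polynomial R →ₐ[R] DualNumber k := aeval DualNumber.eps with hf
  have hp0 : algebraMap R (DualNumber k) p = 0 := by
    have : algebraMap R k p = 0 := by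
      apply Ideal.Quotient.eq_zero_iff_mem.mpr
      rw [hmax]; exact Ideal.mem_span_singleton_self p
    rw [IsScalarTower.algebraMap_apply R k (DualNumber k), this, map_zero]
  have h1 : f (X^2 - C p) = 0 := by
    simp only [hf, map_sub, map_pow, aeval_X, aeval_C, sq, map_mul, DualNumber.eps_mul_eps,
      hp0, sub_zero]
  have h2 : f (X^(2*ℓ-1)) = 0 := by
    have h3 : 2*ℓ-1 = 2 + (2*ℓ-3) := by omega
    simp only [hf, map_pow, aeval_X, h3, pow_add, sq, map_mul, DualNumber.eps_mul_eps, zero_mul]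
  have key : ∀ a ∈ Ideal.span ({X ^ 2 - C p, X ^ (2 * ℓ - 1)} : Set (Polynomial R)), f a = 0 := by
    intro a ha
    have hle : Ideal.span ({X ^ 2 - C p, X ^ (2 * ℓ - 1)} : Set (Polynomial R)) ≤
        RingHom.ker (f : Polynomial R →+* DualNumber k) := by
      rw [Ideal.span_le]
      rintro x (rfl | rfl) <;> simp [RingHom.mem_ker, h1, h2]
    exact hle ha
  set φ : Aext R p ℓ →ₐ[R] DualNumber k := Ideal.Quotient.liftₐ _ f key with hφ
  have hφπ : φ (piA R p ℓ) = DualNumber.eps := by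
    show f X = DualNumber.eps
    simp [hf]
  have hεne : (DualNumber.eps : DualNumber k) ≠ 0 := by
    intro h
    have := TrivSqZeroExt.inr_injective (M := k) (R := k) (h.trans (TrivSqZeroExt.inr_zero k).symm)
    exact one_ne_zero this
  -- annihilator lemma in R
  have hann : ∀ a : R, p^(ℓ-1) * a = 0 → ∃ b, a = p * b := by
    intro a ha
    by_contra hc
    push_neg at hc
    have hnd : ¬ p ∣ a := by rintro ⟨b, rfl⟩; exact hc b rfl
    have hmem : a ∉ IsLocalRing.maximalIdeal R := by
      rw [hmax, Ideal.mem_span_singleton]; exact hnd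
    have hu : IsUnit a := by
      by_contra h
      exact hmem (IsLocalRing.mem_maximalIdeal a |>.mpr h)
    obtain ⟨u, rfl⟩ := hu
    have hz : p^(ℓ-1) = 0 := by
      have := congrArg (· * (u⁻¹ : Rˣ).val) ha
      simpa [mul_assoc] using this
    apply hnil'
    rw [Ideal.span_singleton_pow, Ideal.span_singleton_eq_bot.mpr hz]
  -- facts in A
  set I := Ideal.span ({X ^ 2 - C p, X ^ (2 * ℓ - 1)} : Set (Polynomial R)) with hI
  have halg : ∀ r : R, algebraMap R (Aext R p ℓ) r = Ideal.Quotient.mk I (C r) := fun r => rfl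
  have hπ2 : (piA R p ℓ)^2 = algebraMap R (Aext R p ℓ) p := by
    rw [halg, piA, ← map_pow, Ideal.Quotient.eq]
    exact Ideal.subset_span (Or.inl rfl)
  have hπ0 : (piA R p ℓ)^(2*ℓ-1) = 0 := by
    rw [piA, ← map_pow, Ideal.Quotient.eq_zero_iff_mem]
    exact Ideal.subset_span (Or.inr rfl)
  have hkey : algebraMap R (Aext R p ℓ) (p^(ℓ-1)) * piA R p ℓ = 0 := by
    rw [map_pow, ← hπ2, ← pow_mul, ← pow_succ]
    have h3 : 2*(ℓ-1)+1 = 2*ℓ-1 := by omega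
    rw [h3, hπ0]
  -- the bases
  obtain ⟨⟨⟨ι', fb⟩⟩⟩ := hfree
  let b := Module.Free.chooseBasis (Aext R p ℓ) V
  have : Nonempty (Module.Free.ChooseBasisIndex (Aext R p ℓ) V) := b.index_nonempty
  obtain ⟨i₀⟩ := this
  set e : V := b i₀ with he
  set x : V := piA R p ℓ • e with hx
  -- p^(ℓ-1) kills x
  have hxkill : (p^(ℓ-1) : R) • x = 0 := by
    rw [hx, ← smul_assoc, ← algebraMap_smul (Aext R p ℓ) (p^(ℓ-1)) (piA R p ℓ), smul_eq_mul, hkey]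
    exact zero_smul (Aext R p ℓ) e
  -- coordinates over R
  set c : ι' →₀ R := fb.repr x with hc
  have hckill : ∀ j, p^(ℓ-1) * c j = 0 := by
    intro j
    have := congrArg (fun v => fb.repr v j) hxkill
    simpa [hc, Finsupp.smul_apply, smul_eq_mul] using this
  -- divide by p
  let d : ι' → R := fun j => if h : c j = 0 then 0 else Classical.choose (hann (c j) (hckill j))
  have hd : ∀ j, p * d j = c j := by
    intro j
    by_cases h : c j = 0
    · simp [d, h]
    · simp only [d, dif_neg h]
      exact (Classical.choose_spec (hann (c j) (hckill j))).symm
  have hdsupp : ∀ j, d j ≠ 0 → j ∈ c.support := by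
    intro j hj
    rw [Finsupp.mem_support_iff]
    intro h
    exact hj (by simp [d, h])
  set c' : ι' →₀ R := Finsupp.onFinset c.support d hdsupp with hc'
  set y : V := fb.repr.symm c' with hy
  have hpy : (p : R) • y = x := by
    have : (p : R) • c' = c := by
      ext j
      simp [hc', Finsupp.smul_apply, smul_eq_mul, hd j]
    rw [hy, ← map_smul, this, hc, LinearEquiv.symm_apply_apply]
  -- now compare A-coordinates at i₀
  have hmain : piA R p ℓ • e = algebraMap R (Aext R p ℓ) p • y := by
    rw [algebraMap_smul (Aext R p ℓ) p y, hpy, hx]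
  have hcoord : piA R p ℓ = algebraMap R (Aext R p ℓ) p * b.repr y i₀ := by
    have h5 : (b.repr (piA R p ℓ • e)) i₀ = (b.repr (algebraMap R (Aext R p ℓ) p • y)) i₀ := by
      rw [hmain]
    rw [map_smul, map_smul, Finsupp.smul_apply, Finsupp.smul_apply, smul_eq_mul, smul_eq_mul,
      he, Module.Basis.repr_self, Finsupp.single_eq_same, mul_one] at h5
    exact h5
  -- apply φ
  have := congrArg φ hcoord
  rw [hφπ, map_mul, AlgHom.commutes, hp0, zero_mul] at this
  exact hεne this
end
end

section
/- Let h be a nondegenerate skew hermitian form on a free A-module V of rank 2n with symplectic A-basis u_1,…,u_n,v_1,…,v_n (so h(u_i,v_j)=δ_{ij}, h(u_i,u_j)=h(v_i,v_j)=0). Define f(v,w) = (h(v,w) + h(v,w)*)/2 ∈ R. Then f is a nondegenerate alternating R-bilinear form on V. -/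
open Polynomial

noncomputable section

variable (R : Type) [CommRing R] [IsLocalRing R] [IsPrincipalIdealRing R] [Finite R]
variable (p : R) (ℓ q : ℕ)

set_option linter.unusedSectionVars false

def Tfun (g : Polynomial R) : R := ∑ i ∈ Finset.range ℓ, g.coeff (2*i) * p^i

lemma TfunC (hℓ : 1 ≤ ℓ) (c : R) : Tfun R p ℓ (C c) = c := by
  unfold Tfun
  obtain ⟨m, rfl⟩ : ∃ m, ℓ = m + 1 := ⟨ℓ - 1, by omega⟩
  rw [Finset.sum_range_succ']
  simp [coeff_C, Nat.mul_eq_zero]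

lemma Tadd (g g' : Polynomial R) : Tfun R p ℓ (g + g') = Tfun R p ℓ g + Tfun R p ℓ g' := by
  unfold Tfun
  simp [add_mul, Finset.sum_add_distrib]

lemma hpl (hnil : Ideal.span {p} ^ ℓ = (⊥ : Ideal R)) : p ^ ℓ = 0 := by
  have : p ^ ℓ ∈ Ideal.span {p} ^ ℓ := by
    rw [Ideal.span_singleton_pow]; exact Ideal.mem_span_singleton_self _
  rwa [hnil, Ideal.mem_bot] at this

lemma Tmul1 (hℓ : 1 ≤ ℓ) (hnil : Ideal.span {p} ^ ℓ = (⊥ : Ideal R)) (g : Polynomial R) :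
    Tfun R p ℓ (g * (X^2 - C p)) = 0 := by
  obtain ⟨m, rfl⟩ : ∃ m, ℓ = m + 1 := ⟨ℓ - 1, by omega⟩
  have hp : p ^ (m+1) = 0 := hpl R p _ hnil
  unfold Tfun
  have h1 : ∀ i, (g * (X^2 - C p)).coeff (2*i) =
      (if 2 ≤ 2*i then g.coeff (2*i - 2) else 0) - g.coeff (2*i) * p := by
    intro i
    rw [mul_sub, coeff_sub, coeff_mul_C, coeff_mul_X_pow']
  have e1 : (∑ i ∈ Finset.range (m+1), (if 2 ≤ 2*i then g.coeff (2*i-2) else 0) * p^i)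
      = ∑ i ∈ Finset.range m, g.coeff (2*i) * p^(i+1) := by
    rw [Finset.sum_range_succ']
    have h0 : (if 2 ≤ 2*0 then g.coeff (2*0-2) else 0) * p^0 = 0 := by norm_num
    rw [h0, add_zero]
    apply Finset.sum_congr rfl
    intro i _
    rw [if_pos (by omega), show 2*(i+1)-2 = 2*i by omega]
  have e2 : (∑ i ∈ Finset.range (m+1), g.coeff (2*i) * p * p^i)
      = (∑ i ∈ Finset.range m, g.coeff (2*i) * p^(i+1)) + g.coeff (2*m) * p^(m+1) := by
    rw [Finset.sum_range_succ]
    congr 1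
    · apply Finset.sum_congr rfl; intro i _; rw [pow_succ]; ring
    · rw [pow_succ]; ring
  simp only [h1, sub_mul, Finset.sum_sub_distrib]
  rw [e1, e2, hp]
  ring

lemma Tmul2 (g : Polynomial R) : Tfun R p ℓ (g * X^(2*ℓ-1)) = 0 := by
  unfold Tfun
  apply Finset.sum_eq_zero
  intro i hi
  rw [Finset.mem_range] at hi
  rw [coeff_mul_X_pow', if_neg (by omega)]
  ring

lemma algInj (hℓ : 1 ≤ ℓ) (hnil : Ideal.span {p} ^ ℓ = (⊥ : Ideal R)) (c : R)
    (hc : algebraMap R (Aext R p ℓ) c = 0) : c = 0 := by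
  have h2 : (Ideal.Quotient.mk _ (C c) : Aext R p ℓ) = 0 := hc
  rw [Ideal.Quotient.eq_zero_iff_mem, Ideal.mem_span_pair] at h2
  obtain ⟨x, y, hxy⟩ := h2
  have h3 := congrArg (Tfun R p ℓ) hxy
  rw [Tadd, Tmul1 R p ℓ hℓ hnil, Tmul2, TfunC R p ℓ hℓ, zero_add] at h3
  exact h3.symm

lemma piSq : (piA R p ℓ)^2 = algebraMap R (Aext R p ℓ) p := by
  have : (piA R p ℓ)^2 - algebraMap R (Aext R p ℓ) p
      = Ideal.Quotient.mk _ (X^2 - C p) := by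
    simp [piA, map_sub, map_pow]
    rfl
  have h2 : (Ideal.Quotient.mk (Ideal.span ({X ^ 2 - C p, X ^ (2 * ℓ - 1)} : Set (Polynomial R))) (X^2 - C p) : Aext R p ℓ) = 0 := by
    rw [Ideal.Quotient.eq_zero_iff_mem]; exact Ideal.subset_span (by simp)
  rw [h2] at this
  exact sub_eq_zero.mp this

lemma piPow : (piA R p ℓ)^(2*ℓ-1) = 0 := by
  have : ((piA R p ℓ)^(2*ℓ-1) : Aext R p ℓ) = Ideal.Quotient.mk _ (X^(2*ℓ-1)) := by
    simp [piA, map_pow]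
  rw [this, Ideal.Quotient.eq_zero_iff_mem]
  exact Ideal.subset_span (by simp)

lemma piPowRep : ∀ i : ℕ, ∃ a b : R,
    (piA R p ℓ)^i = algebraMap R (Aext R p ℓ) a + b • piA R p ℓ := by
  intro i
  induction i with
  | zero => exact ⟨1, 0, by simp⟩
  | succ i ih =>
    obtain ⟨a, b, hab⟩ := ih
    refine ⟨b * p, a, ?_⟩
    rw [pow_succ, hab, add_mul, smul_mul_assoc, ← sq, piSq]
    rw [Algebra.smul_def b (algebraMap R (Aext R p ℓ) p), ← map_mul,
      ← Algebra.smul_def a (piA R p ℓ)]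
    exact add_comm _ _

lemma rep (c : Aext R p ℓ) : ∃ a b : R,
    c = algebraMap R (Aext R p ℓ) a + b • piA R p ℓ := by
  obtain ⟨g, rfl⟩ := Ideal.Quotient.mk_surjective c
  induction g using Polynomial.induction_on' with
  | add f g hf hg =>
    obtain ⟨a, b, hab⟩ := hf
    obtain ⟨a', b', hab'⟩ := hg
    exact ⟨a + a', b + b', by rw [map_add, hab, hab', map_add, add_smul]; ring⟩
  | monomial i r =>
    obtain ⟨a, b, hab⟩ := piPowRep R p ℓ i
    refine ⟨r * a, r * b, ?_⟩
    have h1 : (Ideal.Quotient.mk (Ideal.span ({X ^ 2 - C p, X ^ (2 * ℓ - 1)} : Set (Polynomial R))) (monomial i r) : Aext R p ℓ)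
        = algebraMap R (Aext R p ℓ) r * (piA R p ℓ)^i := by
      rw [← Polynomial.C_mul_X_pow_eq_monomial, map_mul, map_pow]
      rfl
    rw [h1, hab, mul_add, map_mul, mul_smul, Algebra.smul_def r (b • piA R p ℓ)]

lemma annP (hℓ : 1 ≤ ℓ) (hmax : IsLocalRing.maximalIdeal R = Ideal.span {p})
    (hnil : Ideal.span {p} ^ ℓ = (⊥ : Ideal R))
    (hnil' : Ideal.span {p} ^ (ℓ - 1) ≠ (⊥ : Ideal R))
    (b : R) (hb : b * p = 0) : ∃ r : R, b = p ^ (ℓ - 1) * r := by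
  classical
  by_cases hb0 : b = 0
  · exact ⟨0, by simp [hb0]⟩
  have hex : ∃ k, b ∉ Ideal.span {p} ^ k := ⟨ℓ, by rw [hnil]; simpa using hb0⟩
  have hk0pos : 1 ≤ Nat.find hex := by
    rcases Nat.eq_zero_or_pos (Nat.find hex) with h0 | h0
    · exfalso; apply Nat.find_spec hex; rw [h0]; simp
    · exact h0
  obtain ⟨m, hme⟩ : ∃ m, Nat.find hex = m + 1 := ⟨_, (Nat.succ_pred_eq_of_pos hk0pos).symm⟩
  have hk0spec : b ∉ Ideal.span {p} ^ (m + 1) := hme ▸ Nat.find_spec hex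
  have hmem : b ∈ Ideal.span {p} ^ m := by
    by_contra hc
    exact absurd (Nat.find_min hex (by omega : m < Nat.find hex)) (by simpa using hc)
  rw [Ideal.span_singleton_pow, Ideal.mem_span_singleton] at hmem
  obtain ⟨r, hr⟩ := hmem
  have hrunit : IsUnit r := by
    by_contra hru
    apply hk0spec
    have hrm : r ∈ IsLocalRing.maximalIdeal R :=
      (IsLocalRing.mem_maximalIdeal r).mpr (mem_nonunits_iff.mpr hru)
    rw [hmax, Ideal.mem_span_singleton] at hrm
    obtain ⟨s, hs⟩ := hrm
    rw [Ideal.span_singleton_pow, Ideal.mem_span_singleton]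
    exact ⟨s, by rw [hr, hs, pow_succ]; ring⟩
  have hpk : p ^ (m + 1) = 0 := by
    obtain ⟨u, hu⟩ := hrunit
    have h1 : p ^ (m + 1) * r = 0 := by
      rw [pow_succ]
      calc p ^ m * p * r = (p ^ m * r) * p := by ring
      _ = b * p := by rw [← hr]
      _ = 0 := hb
    have := congrArg (fun x => x * (↑u⁻¹ : R)) h1
    simpa [← hu, mul_assoc] using this
  have hk0ge : ℓ - 1 ≤ m := by
    by_contra hlt
    apply hnil'
    have h1 : Ideal.span {p} ^ (ℓ - 1) ≤ Ideal.span {p} ^ (m + 1) :=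
      Ideal.pow_le_pow_right (by omega)
    have h2 : Ideal.span {p} ^ (m + 1) = ⊥ := by
      rw [Ideal.span_singleton_pow, Ideal.span_singleton_eq_bot.mpr hpk]
    rw [← le_bot_iff, ← h2]
    exact h1
  refine ⟨p ^ (m - (ℓ - 1)) * r, ?_⟩
  rw [hr, ← mul_assoc, ← pow_add, show ℓ - 1 + (m - (ℓ - 1)) = m by omega]

lemma twoUnit (hq : Nat.card (IsLocalRing.ResidueField R) = q) (hodd : Odd q) :
    IsUnit (2 : R) := by
  haveI hfin : Finite (IsLocalRing.ResidueField R) :=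
    Finite.of_surjective _ Ideal.Quotient.mk_surjective
  have h2 : (2 : IsLocalRing.ResidueField R) ≠ 0 := by
    intro h20
    have hdvd : ringChar (IsLocalRing.ResidueField R) ∣ 2 := by
      rw [← ringChar.spec]
      exact_mod_cast h20
    haveI := ringChar.charP (IsLocalRing.ResidueField R)
    have hprime : (ringChar (IsLocalRing.ResidueField R)).Prime :=
      CharP.char_is_prime (IsLocalRing.ResidueField R)
        (ringChar (IsLocalRing.ResidueField R))
    have hchar : ringChar (IsLocalRing.ResidueField R) = 2 :=
      (Nat.prime_dvd_prime_iff_eq hprime Nat.prime_two).mp hdvd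
    haveI : Fintype (IsLocalRing.ResidueField R) := Fintype.ofFinite _
    haveI : CharP (IsLocalRing.ResidueField R) 2 := by rw [← hchar]; exact ringChar.charP _
    obtain ⟨n, -, hcard⟩ := FiniteField.card (IsLocalRing.ResidueField R) 2
    rw [← Nat.card_eq_fintype_card, hq] at hcard
    have : ¬ Odd q := by
      rw [hcard, ← Nat.not_even_iff_odd]
      simp [Nat.even_pow, n.ne_zero]
    exact this hodd
  by_contra hu
  apply h2
  have hmem : (2 : R) ∈ IsLocalRing.maximalIdeal R :=
    (IsLocalRing.mem_maximalIdeal 2).mpr (mem_nonunits_iff.mpr hu)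
  have h3 : IsLocalRing.residue R 2 = 0 :=
    (IsLocalRing.residue_eq_zero_iff _).mpr hmem
  rw [← h3, map_ofNat]

set_option maxHeartbeats 1000000 in
theorem stmt7
    (hℓ : 1 ≤ ℓ)
    (hmax : IsLocalRing.maximalIdeal R = Ideal.span {p})
    (hnil : Ideal.span {p} ^ ℓ = (⊥ : Ideal R))
    (hnil' : Ideal.span {p} ^ (ℓ - 1) ≠ (⊥ : Ideal R))
    (hq : Nat.card (IsLocalRing.ResidueField R) = q)
    (hodd : Odd q)
    (σ : Aext R p ℓ →ₐ[R] Aext R p ℓ)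
    (hσ : σ (piA R p ℓ) = - piA R p ℓ)
    (V : Type) [AddCommGroup V] [Module (Aext R p ℓ) V] [Module R V]
    [IsScalarTower R (Aext R p ℓ) V]
    (n : ℕ) (hn : 1 ≤ n)
    (b : Module.Basis (Fin n ⊕ Fin n) (Aext R p ℓ) V)
    (h : V → V → Aext R p ℓ)
    (hadd : ∀ v v' w : V, h (v + v') w = h v w + h v' w)
    (hs1 : ∀ (a : Aext R p ℓ) (v w : V), h (a • v) w = σ a * h v w)
    (hs2 : ∀ (a : Aext R p ℓ) (v w : V), h v (a • w) = a * h v w)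
    (hsk : ∀ v w : V, h w v = - σ (h v w))
    (hb1 : ∀ i j, h (b (Sum.inl i)) (b (Sum.inr j)) = if i = j then 1 else 0)
    (hb2 : ∀ i j, h (b (Sum.inl i)) (b (Sum.inl j)) = 0)
    (hb3 : ∀ i j, h (b (Sum.inr i)) (b (Sum.inr j)) = 0)
    (f : V → V → R)
    (hf : ∀ v w : V, algebraMap R (Aext R p ℓ) (2 * f v w) = h v w + σ (h v w))
    :
    (∀ v w w' : V, f v (w + w') = f v w + f v w') ∧
    (∀ (r : R) (v w : V), f v (r • w) = r * f v w) ∧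
    (∀ v v' w : V, f (v + v') w = f v w + f v' w) ∧
    (∀ (r : R) (v w : V), f (r • v) w = r * f v w) ∧
    (∀ v : V, f v v = 0) ∧
    (∀ v : V, (∀ w : V, f v w = 0) → v = 0) := by
  have h2R : IsUnit (2 : R) := twoUnit R q hq hodd
  have cancel : ∀ x y : R,
      algebraMap R (Aext R p ℓ) (2 * x) = algebraMap R (Aext R p ℓ) (2 * y) → x = y := by
    intro x y hxy
    have h0 : algebraMap R (Aext R p ℓ) (2 * x - 2 * y) = 0 := by
      rw [map_sub, hxy, sub_self]
    have h1 : 2 * x - 2 * y = 0 := algInj R p ℓ hℓ hnil _ h0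
    have h2 : 2 * x = 2 * y := by linear_combination h1
    exact h2R.mul_left_cancel h2
  have h0w : ∀ w : V, h 0 w = 0 := by
    intro w
    have := hadd 0 0 w
    rw [add_zero] at this
    exact (left_eq_add.mp this)
  have hadd2 : ∀ v w w' : V, h v (w + w') = h v w + h v w' := by
    intro v w w'
    rw [hsk (w + w') v, hadd, map_add, neg_add, ← hsk w v, ← hsk w' v]
  have hsmul2 : ∀ (r : R) (v w : V),
      h v (r • w) = algebraMap R (Aext R p ℓ) r * h v w := by
    intro r v w
    rw [← algebraMap_smul (Aext R p ℓ) r w, hs2]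
  have hsmul1 : ∀ (r : R) (v w : V),
      h (r • v) w = algebraMap R (Aext R p ℓ) r * h v w := by
    intro r v w
    rw [← algebraMap_smul (Aext R p ℓ) r v, hs1, σ.commutes]
  have sigsq : ∀ c : Aext R p ℓ, σ (σ c) = c := by
    intro c
    obtain ⟨a, b', hab⟩ := rep R p ℓ c
    rw [hab, map_add, map_add, σ.commutes, σ.commutes, map_smul, map_smul, hσ, map_neg,
      hσ, neg_neg]
  have h2A : IsUnit ((2 : Aext R p ℓ)) := by
    have := h2R.map (algebraMap R (Aext R p ℓ))
    rwa [map_ofNat] at this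
  have zeroLem : ∀ c : Aext R p ℓ,
      σ c + c = 0 → piA R p ℓ * (σ c - c) = 0 → c = 0 := by
    intro c h1 h2
    have hsig : σ c = -c := by linear_combination h1
    have hpc : piA R p ℓ * c = 0 := by
      have h4 : (2 : Aext R p ℓ) * (piA R p ℓ * c) = (2 : Aext R p ℓ) * 0 := by
        rw [mul_zero]; linear_combination -h2 + piA R p ℓ * hsig
      exact h2A.mul_left_cancel h4
    obtain ⟨a, b', hab⟩ := rep R p ℓ c
    have hsc : σ c = algebraMap R (Aext R p ℓ) a - b' • piA R p ℓ := by
      rw [hab, map_add, σ.commutes, map_smul, hσ, smul_neg, ← sub_eq_add_neg]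
    have ha0 : a = 0 := by
      have e1 : algebraMap R (Aext R p ℓ) (2 * a) = 0 := by
        have h1' := h1
        rw [hsc, hab] at h1'
        rw [map_mul, map_ofNat]
        linear_combination h1'
      have e2 : 2 * a = 0 := algInj R p ℓ hℓ hnil _ e1
      exact h2R.mul_left_cancel (by rw [e2, mul_zero])
    subst ha0
    rw [map_zero, zero_add] at hab
    have hbp : b' * p = 0 := by
      apply algInj R p ℓ hℓ hnil
      calc algebraMap R (Aext R p ℓ) (b' * p)
          = algebraMap R (Aext R p ℓ) b' * algebraMap R (Aext R p ℓ) p := map_mul _ _ _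
        _ = algebraMap R (Aext R p ℓ) b' * piA R p ℓ ^ 2 := by rw [piSq]
        _ = piA R p ℓ * (algebraMap R (Aext R p ℓ) b' * piA R p ℓ) := by ring
        _ = piA R p ℓ * (b' • piA R p ℓ) := by rw [Algebra.smul_def b' (piA R p ℓ)]
        _ = piA R p ℓ * c := by rw [← hab]
        _ = 0 := hpc
    obtain ⟨r, hr⟩ := annP R p ℓ hℓ hmax hnil hnil' b' hbp
    have hppi : (p ^ (ℓ - 1)) • piA R p ℓ = 0 := by
      rw [Algebra.smul_def (p ^ (ℓ - 1)) (piA R p ℓ), map_pow, ← piSq, ← pow_mul,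
        ← pow_succ, show 2 * (ℓ - 1) + 1 = 2 * ℓ - 1 by omega, piPow]
    rw [hab, hr, mul_comm (p ^ (ℓ - 1)) r, mul_smul, hppi, smul_zero]
  -- the six parts
  refine ⟨?_, ?_, ?_, ?_, ?_, ?_⟩
  · intro v w w'
    apply cancel
    calc algebraMap R (Aext R p ℓ) (2 * f v (w + w'))
        = h v (w + w') + σ (h v (w + w')) := hf v (w + w')
      _ = (h v w + σ (h v w)) + (h v w' + σ (h v w')) := by
          rw [hadd2, map_add]; ring
      _ = algebraMap R (Aext R p ℓ) (2 * f v w)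
          + algebraMap R (Aext R p ℓ) (2 * f v w') := by rw [hf, hf]
      _ = algebraMap R (Aext R p ℓ) (2 * (f v w + f v w')) := by
          rw [← map_add]; congr 1; ring
  · intro r v w
    apply cancel
    calc algebraMap R (Aext R p ℓ) (2 * f v (r • w))
        = h v (r • w) + σ (h v (r • w)) := hf _ _
      _ = algebraMap R (Aext R p ℓ) r * (h v w + σ (h v w)) := by
          rw [hsmul2, map_mul, σ.commutes]; ring
      _ = algebraMap R (Aext R p ℓ) r * algebraMap R (Aext R p ℓ) (2 * f v w) := by
          rw [hf]
      _ = algebraMap R (Aext R p ℓ) (2 * (r * f v w)) := by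
          rw [← map_mul]; congr 1; ring
  · intro v v' w
    apply cancel
    calc algebraMap R (Aext R p ℓ) (2 * f (v + v') w)
        = h (v + v') w + σ (h (v + v') w) := hf _ _
      _ = (h v w + σ (h v w)) + (h v' w + σ (h v' w)) := by
          rw [hadd, map_add]; ring
      _ = algebraMap R (Aext R p ℓ) (2 * f v w)
          + algebraMap R (Aext R p ℓ) (2 * f v' w) := by rw [hf, hf]
      _ = algebraMap R (Aext R p ℓ) (2 * (f v w + f v' w)) := by
          rw [← map_add]; congr 1; ring
  · intro r v w
    apply cancel
    calc algebraMap R (Aext R p ℓ) (2 * f (r • v) w)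
        = h (r • v) w + σ (h (r • v) w) := hf _ _
      _ = algebraMap R (Aext R p ℓ) r * (h v w + σ (h v w)) := by
          rw [hsmul1, map_mul, σ.commutes]; ring
      _ = algebraMap R (Aext R p ℓ) r * algebraMap R (Aext R p ℓ) (2 * f v w) := by
          rw [hf]
      _ = algebraMap R (Aext R p ℓ) (2 * (r * f v w)) := by
          rw [← map_mul]; congr 1; ring
  · intro v
    apply cancel
    rw [hf v v, mul_zero, map_zero]
    linear_combination hsk v v
  · intro v hv
    have hcond : ∀ w : V, h v w + σ (h v w) = 0 := by
      intro w
      rw [← hf v w, hv w, mul_zero, map_zero]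
    have hsumadd : ∀ (s : Finset (Fin n ⊕ Fin n)) (g : Fin n ⊕ Fin n → V) (w : V),
        h (∑ i ∈ s, g i) w = ∑ i ∈ s, h (g i) w := by
      intro s g w
      induction s using Finset.induction with
      | empty => simpa using h0w w
      | insert _ _ hnotmem ih =>
        rw [Finset.sum_insert hnotmem, Finset.sum_insert hnotmem, hadd, ih]
    have hsum : ∀ w : V, h v w = ∑ k, σ (b.repr v k) * h (b k) w := by
      intro w
      conv_lhs => rw [← b.sum_repr v]
      rw [hsumadd]
      exact Finset.sum_congr rfl fun k _ => hs1 _ _ _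
    have hv1 : ∀ j, h v (b (Sum.inr j)) = σ (b.repr v (Sum.inl j)) := by
      intro j
      rw [hsum, Fintype.sum_sum_type]
      simp only [hb1, hb3, mul_ite, mul_one, mul_zero, Finset.sum_ite_eq',
        Finset.mem_univ, if_true, Finset.sum_const_zero, add_zero]
    have hv2 : ∀ j, h v (b (Sum.inl j)) = - σ (b.repr v (Sum.inr j)) := by
      intro j
      rw [hsum, Fintype.sum_sum_type]
      have e : ∀ i, h (b (Sum.inr i)) (b (Sum.inl j)) = -(if j = i then 1 else 0) := by
        intro i
        rw [hsk, hb1]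
        split_ifs <;> simp
      simp only [hb2, e, mul_zero, Finset.sum_const_zero, zero_add]
      have e2 : ∀ x, σ ((b.repr v) (Sum.inr x)) * -(if j = x then (1 : Aext R p ℓ) else 0)
          = (if j = x then -σ ((b.repr v) (Sum.inr x)) else 0) := by
        intro x; split_ifs <;> ring
      simp only [e2, Finset.sum_ite_eq, Finset.mem_univ, if_true]
    have hzero : ∀ k, b.repr v k = 0 := by
      intro k
      match k with
      | Sum.inl j =>
        apply zeroLem (b.repr v (Sum.inl j))
        · have e1 := hcond (b (Sum.inr j))
          rw [hv1 j, sigsq] at e1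
          linear_combination e1
        · have e2 := hcond (piA R p ℓ • b (Sum.inr j))
          rw [hs2, hv1 j, map_mul, hσ, sigsq] at e2
          linear_combination e2
      | Sum.inr j =>
        apply zeroLem (b.repr v (Sum.inr j))
        · have e1 := hcond (b (Sum.inl j))
          rw [hv2 j, map_neg, sigsq] at e1
          linear_combination -e1
        · have e2 := hcond (piA R p ℓ • b (Sum.inl j))
          rw [hs2, hv2 j, map_mul, map_neg, hσ, sigsq] at e2
          linear_combination -e2
    have hrepr : b.repr v = 0 := by
      ext k
      exact hzero k
    exact (LinearEquiv.map_eq_zero_iff b.repr).mp hrepr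
end
end

section
/- With f the alternating form associated to the nondegenerate skew hermitian form h on the free A-module V, for every i ≥ 1 one has r^{2i-1} V = V(m^i), where V(m^i) = {v ∈ V : f(v,V) ⊆ m^i}, r = Aπ, and m = Rp. In particular each r^j V is invariant under the symplectic group Sp(V,f). -/
open Polynomial

noncomputable section

variable (R : Type) [CommRing R] [IsLocalRing R] [IsPrincipalIdealRing R] [Finite R]
variable (p : R) (ℓ q : ℕ)

/-!
Every element of `A` is `x + yπ` with `x, y ∈ R`, and `σ (x + yπ) = x - yπ`; since `2` is a unit,
`f v w` is the `R`-component of `h v w`. In a symplectic basis the coordinates of `v` are, up to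
`σ` and sign, the values of `h v` on the dual basis vectors, so for every `σ`-stable ideal `I`
one has `v ∈ I V` iff `h v V ⊆ I`. Moreover `x + yπ ∈ π^(2k+1) A` iff `p^(k+1)` divides both `x`
and `p y`, and these are the `R`-components of `h v w = x + yπ` and of `h v (π w) = p y + xπ`.
For even exponents, `π^(2k) V = p^k V` is preserved by every `R`-linear map.
-/

namespace IsLocalRing

variable {R : Type*} [CommRing R] [IsLocalRing R]

theorem isUnit_two_of_odd_card_residueField (h : Odd (Nat.card (ResidueField R))) :
    IsUnit (2 : R) := by
  have : Finite (ResidueField R) := Nat.finite_of_card_ne_zero (by rintro h0; simp [h0] at h)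
  have : Fintype (ResidueField R) := Fintype.ofFinite _
  rw [← residue_ne_zero_iff_isUnit, map_ofNat]
  intro h2
  obtain ⟨m, hm⟩ := h
  have hcard := Nat.cast_card_eq_zero (ResidueField R)
  rw [← Nat.card_eq_fintype_card, hm] at hcard
  push_cast at hcard
  rw [h2, zero_mul, zero_add] at hcard
  exact one_ne_zero hcard

theorem pow_dvd_of_mul_eq_zero {p : R} (hmax : maximalIdeal R = Ideal.span {p}) {m : ℕ}
    (hpm : p ^ m ≠ 0) {z : R} (hz : p * z = 0) : p ^ m ∣ z := by
  suffices ∀ k ≤ m, p ^ k ∣ z from this m le_rfl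
  intro k hk
  -- `z = p ^ k * w` with `w` a unit would force `p ^ (k + 1) = 0`, hence `p ^ m = 0`
  induction k with
  | zero => simp
  | succ k ih =>
    obtain ⟨w, rfl⟩ := ih (by omega)
    have hw : w ∈ maximalIdeal R := fun hw => hpm <| by
      obtain ⟨u, rfl⟩ := hw
      have : p ^ (k + 1) = 0 := u.mul_left_eq_zero.mp (by rw [← hz]; ring)
      rw [← Nat.sub_add_cancel hk, pow_add, this, mul_zero]
    rw [hmax, Ideal.mem_span_singleton] at hw
    obtain ⟨w', rfl⟩ := hw
    exact ⟨w', by ring⟩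

end IsLocalRing

namespace Polynomial

variable {R : Type*} [CommRing R]

theorem exists_eq_C_mul_X_add_C_add_mul [Nontrivial R] {g : R[X]} (hg : g.Monic)
    (hdeg : g.degree = 2) (c : R[X]) : ∃ c₀ c₁ d, c = C c₁ * X + C c₀ + g * d := by
  have hmod : (c %ₘ g).degree ≤ 1 := by
    have := degree_modByMonic_lt c hg
    rw [hdeg] at this
    exact Order.le_of_lt_succ (by exact_mod_cast this)
  refine ⟨(c %ₘ g).coeff 0, (c %ₘ g).coeff 1, c /ₘ g, ?_⟩
  rw [← eq_X_add_C_of_degree_le_one hmod, modByMonic_add_div c g]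

theorem C_mul_X_add_C_eq_zero_of_dvd [Nontrivial R] {g : R[X]} (hg : g.Monic)
    (hdeg : g.degree = 2) {a b : R} (hdvd : g ∣ C a * X + C b) : a = 0 ∧ b = 0 := by
  have hzero : C a * X + C b = 0 := by
    by_contra h0
    refine hg.not_dvd_of_degree_lt h0 ?_ hdvd
    exact (degree_linear_le).trans_lt (by rw [hdeg]; decide)
  exact ⟨by simpa using congrArg (coeff · 1) hzero, by simpa using congrArg (coeff · 0) hzero⟩

variable {p : R} {ℓ : ℕ}

theorem span_X_sq_sub_C_X_pow_eq (hℓ : 1 ≤ ℓ) :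
    Ideal.span {X ^ 2 - C p, X ^ (2 * ℓ - 1)} = Ideal.span {X ^ 2 - C p, C (p ^ (ℓ - 1)) * X} := by
  obtain ⟨d, hd⟩ : X ^ 2 - C p ∣ (X ^ 2) ^ (ℓ - 1) - C p ^ (ℓ - 1) := sub_dvd_pow_sub_pow _ _ _
  have : X ^ (2 * ℓ - 1) = C (p ^ (ℓ - 1)) * X + d * X * (X ^ 2 - C p) := by
    rw [show 2 * ℓ - 1 = 2 * (ℓ - 1) + 1 by omega, pow_succ, pow_mul, map_pow]
    linear_combination X * hd
  rw [this, Ideal.span_pair_add_mul_left]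

theorem C_mul_X_add_C_mem_span_X_sq_sub_C_iff [Nontrivial R] (hℓ : 1 ≤ ℓ) (hp : p ^ ℓ = 0)
    (x y : R) :
    C y * X + C x ∈ Ideal.span {X ^ 2 - C p, X ^ (2 * ℓ - 1)} ↔ x = 0 ∧ p ^ (ℓ - 1) ∣ y := by
  have hg : (X ^ 2 - C p).Monic := monic_X_pow_sub_C p two_ne_zero
  have hdeg : (X ^ 2 - C p).degree = 2 := degree_X_pow_sub_C two_pos p
  have hP : C (p ^ (ℓ - 1)) * C p = 0 := by
    rw [← C_mul, ← pow_succ, Nat.sub_add_cancel hℓ, hp, C_0]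
  rw [span_X_sq_sub_C_X_pow_eq hℓ, Ideal.mem_span_pair]
  constructor
  · rintro ⟨a, c, hac⟩
    obtain ⟨c₀, c₁, d, rfl⟩ := exists_eq_C_mul_X_add_C_add_mul hg hdeg c
    have hdvd : X ^ 2 - C p ∣ C (y - p ^ (ℓ - 1) * c₀) * X + C x :=
      ⟨a + C (p ^ (ℓ - 1) * c₁) + d * C (p ^ (ℓ - 1)) * X, by
        simp only [map_sub, map_mul]
        linear_combination -hac + C c₁ * hP⟩
    obtain ⟨hy, hx⟩ := C_mul_X_add_C_eq_zero_of_dvd hg hdeg hdvd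
    exact ⟨hx, c₀, sub_eq_zero.mp hy⟩
  · rintro ⟨rfl, s, rfl⟩
    exact ⟨0, C s, by simp only [map_mul, map_zero]; ring⟩

end Polynomial

namespace Aext

open Polynomial

variable {R : Type} [CommRing R] {p : R} {ℓ : ℕ}

theorem algebraMap_add_mul_piA (x y : R) :
    algebraMap R (Aext R p ℓ) x + algebraMap R (Aext R p ℓ) y * piA R p ℓ =
      Ideal.Quotient.mk _ (C y * X + C x) := by
  rw [add_comm]
  rfl

theorem piA_sq : piA R p ℓ ^ 2 = algebraMap R (Aext R p ℓ) p := by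
  rw [piA, ← map_pow, ← sub_eq_zero, ← Ideal.Quotient.mk_algebraMap, ← map_sub,
    Ideal.Quotient.eq_zero_iff_mem]
  exact Ideal.subset_span (Set.mem_insert _ _)

theorem piA_pow_two_mul_add_one (k : ℕ) :
    piA R p ℓ ^ (2 * k + 1) = algebraMap R (Aext R p ℓ) p ^ k * piA R p ℓ := by
  rw [pow_succ, pow_mul, piA_sq]

theorem exists_eq_add_mul_piA [Nontrivial R] (a : Aext R p ℓ) :
    ∃ x y : R, a = algebraMap R (Aext R p ℓ) x + algebraMap R (Aext R p ℓ) y * piA R p ℓ := by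
  obtain ⟨c, rfl⟩ := Ideal.Quotient.mk_surjective a
  obtain ⟨x, y, d, rfl⟩ := exists_eq_C_mul_X_add_C_add_mul (monic_X_pow_sub_C p two_ne_zero)
    (degree_X_pow_sub_C two_pos p) c
  refine ⟨x, y, ?_⟩
  rw [algebraMap_add_mul_piA, map_add _ (C y * X + C x), map_mul,
    Ideal.Quotient.eq_zero_iff_mem.mpr (Ideal.subset_span (Set.mem_insert _ _)), zero_mul, add_zero]

theorem add_mul_piA_eq_zero_iff [Nontrivial R] (hℓ : 1 ≤ ℓ) (hp : p ^ ℓ = 0) (x y : R) :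
    algebraMap R (Aext R p ℓ) x + algebraMap R (Aext R p ℓ) y * piA R p ℓ = 0 ↔
      x = 0 ∧ p ^ (ℓ - 1) ∣ y := by
  rw [algebraMap_add_mul_piA, Ideal.Quotient.eq_zero_iff_mem]
  exact C_mul_X_add_C_mem_span_X_sq_sub_C_iff hℓ hp x y

theorem algebraMap_injective [Nontrivial R] (hℓ : 1 ≤ ℓ) (hp : p ^ ℓ = 0) :
    Function.Injective (algebraMap R (Aext R p ℓ)) :=
  (injective_iff_map_eq_zero _).mpr fun x hx =>
    ((add_mul_piA_eq_zero_iff hℓ hp x 0).mp (by simpa using hx)).1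

theorem add_mul_piA_mem_span_piA_pow_iff [IsLocalRing R]
    (hmax : IsLocalRing.maximalIdeal R = Ideal.span {p}) (hℓ : 1 ≤ ℓ) (hp : p ^ ℓ = 0)
    (hp' : p ^ (ℓ - 1) ≠ 0) (k : ℕ) (x y : R) :
    algebraMap R (Aext R p ℓ) x + algebraMap R (Aext R p ℓ) y * piA R p ℓ ∈
        Ideal.span {piA R p ℓ} ^ (2 * k + 1) ↔ p ^ (k + 1) ∣ x ∧ p ^ (k + 1) ∣ p * y := by
  have hπ := piA_sq (p := p) (ℓ := ℓ)
  rw [Ideal.span_singleton_pow, Ideal.mem_span_singleton, piA_pow_two_mul_add_one]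
  constructor
  · rintro ⟨c, hc⟩
    obtain ⟨s, t, rfl⟩ := exists_eq_add_mul_piA c
    have hzero : algebraMap R (Aext R p ℓ) (x - p ^ (k + 1) * t)
        + algebraMap R (Aext R p ℓ) (y - p ^ k * s) * piA R p ℓ = 0 := by
      simp only [map_sub, map_mul, map_pow]
      linear_combination hc + algebraMap R (Aext R p ℓ) t * algebraMap R (Aext R p ℓ) p ^ k * hπ
    obtain ⟨hx, s', hs'⟩ := (add_mul_piA_eq_zero_iff hℓ hp _ _).mp hzero
    refine ⟨⟨t, sub_eq_zero.mp hx⟩, s, ?_⟩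
    have hpℓ : p * p ^ (ℓ - 1) = 0 := by rw [← pow_succ', Nat.sub_add_cancel hℓ, hp]
    linear_combination p * hs' + s' * hpℓ
  · rintro ⟨⟨a, rfl⟩, w, hw⟩
    obtain ⟨s, hs⟩ := IsLocalRing.pow_dvd_of_mul_eq_zero hmax hp'
      (show p * (y - p ^ k * w) = 0 by linear_combination hw)
    have hvanish := (add_mul_piA_eq_zero_iff hℓ hp 0 (p ^ (ℓ - 1) * s)).mpr ⟨rfl, dvd_mul_right _ _⟩
    refine ⟨algebraMap R (Aext R p ℓ) a * piA R p ℓ + algebraMap R (Aext R p ℓ) w, ?_⟩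
    rw [sub_eq_iff_eq_add'] at hs
    simp only [hs, map_add, map_mul, map_pow, map_zero, zero_add] at hvanish ⊢
    linear_combination hvanish - algebraMap R (Aext R p ℓ) a * algebraMap R (Aext R p ℓ) p ^ k * hπ

variable {σ : Aext R p ℓ →ₐ[R] Aext R p ℓ}

theorem map_add_mul_piA (hσ : σ (piA R p ℓ) = -piA R p ℓ) (x y : R) :
    σ (algebraMap R (Aext R p ℓ) x + algebraMap R (Aext R p ℓ) y * piA R p ℓ) =
      algebraMap R (Aext R p ℓ) x - algebraMap R (Aext R p ℓ) y * piA R p ℓ := by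
  rw [map_add, map_mul, σ.commutes, σ.commutes, hσ]
  ring

theorem involutive_of_map_piA [Nontrivial R] (hσ : σ (piA R p ℓ) = -piA R p ℓ) :
    Function.Involutive σ := by
  intro a
  obtain ⟨x, y, rfl⟩ := exists_eq_add_mul_piA a
  rw [map_add_mul_piA hσ, map_sub, map_mul, σ.commutes, σ.commutes, hσ]
  ring

theorem map_mem_span_piA_pow (hσ : σ (piA R p ℓ) = -piA R p ℓ) {k : ℕ} {a : Aext R p ℓ}
    (ha : a ∈ Ideal.span {piA R p ℓ} ^ k) : σ a ∈ Ideal.span {piA R p ℓ} ^ k := by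
  rw [Ideal.span_singleton_pow, Ideal.mem_span_singleton] at ha ⊢
  obtain ⟨c, rfl⟩ := ha
  exact ⟨(-1) ^ k * σ c, by rw [map_mul, map_pow, hσ]; ring⟩

theorem eq_of_algebraMap_two_mul_eq [Nontrivial R] (hℓ : 1 ≤ ℓ) (hp : p ^ ℓ = 0)
    (h2 : IsUnit (2 : R)) (hσ : σ (piA R p ℓ) = -piA R p ℓ) {r x y : R}
    (hr : algebraMap R (Aext R p ℓ) (2 * r) =
      algebraMap R (Aext R p ℓ) x + algebraMap R (Aext R p ℓ) y * piA R p ℓ +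
        σ (algebraMap R (Aext R p ℓ) x + algebraMap R (Aext R p ℓ) y * piA R p ℓ)) :
    r = x := by
  rw [map_add_mul_piA hσ, add_add_sub_cancel, ← map_add, ← two_mul] at hr
  exact h2.mul_left_cancel (algebraMap_injective hℓ hp hr)

end Aext

section SymplecticBasis

variable {A V ι F : Type*} [CommRing A] [AddCommGroup V] [Module A V] [Fintype ι]
  [FunLike F A A] {σ : F} {h : V → V → A}

theorem sum_smul_apply_of_sesquilinear (hadd : ∀ v v' w : V, h (v + v') w = h v w + h v' w)
    (hs1 : ∀ (a : A) (v w : V), h (a • v) w = σ a * h v w) {κ : Type*} [Fintype κ]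
    (c : κ → A) (e : κ → V) (w : V) : h (∑ k, c k • e k) w = ∑ k, σ (c k) * h (e k) w := by
  refine (map_sum (AddMonoidHom.mk' (h · w) (hadd · · w)) _ _).trans ?_
  simp only [AddMonoidHom.mk'_apply, hs1]

variable [DecidableEq ι] {b : Module.Basis (ι ⊕ ι) A V}

theorem apply_basis_inr_of_symplectic (hadd : ∀ v v' w : V, h (v + v') w = h v w + h v' w)
    (hs1 : ∀ (a : A) (v w : V), h (a • v) w = σ a * h v w)
    (hb1 : ∀ i j, h (b (Sum.inl i)) (b (Sum.inr j)) = if i = j then 1 else 0)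
    (hb3 : ∀ i j, h (b (Sum.inr i)) (b (Sum.inr j)) = 0) (v : V) (j : ι) :
    h v (b (Sum.inr j)) = σ (b.repr v (Sum.inl j)) := by
  conv_lhs => rw [← b.sum_repr v]
  rw [sum_smul_apply_of_sesquilinear hadd hs1, Fintype.sum_sum_type]
  simp [hb1, hb3]

variable [RingHomClass F A A]

theorem apply_basis_inl_of_symplectic (hadd : ∀ v v' w : V, h (v + v') w = h v w + h v' w)
    (hs1 : ∀ (a : A) (v w : V), h (a • v) w = σ a * h v w) (hsk : ∀ v w : V, h w v = -σ (h v w))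
    (hb1 : ∀ i j, h (b (Sum.inl i)) (b (Sum.inr j)) = if i = j then 1 else 0)
    (hb2 : ∀ i j, h (b (Sum.inl i)) (b (Sum.inl j)) = 0) (v : V) (j : ι) :
    h v (b (Sum.inl j)) = -σ (b.repr v (Sum.inr j)) := by
  conv_lhs => rw [← b.sum_repr v]
  rw [sum_smul_apply_of_sesquilinear hadd hs1, Fintype.sum_sum_type]
  simp [hb2, fun i => hsk (b (Sum.inl j)) (b (Sum.inr i)), hb1]

theorem mem_smul_top_iff_forall_apply_mem (hσ : Function.Involutive σ)
    (hadd : ∀ v v' w : V, h (v + v') w = h v w + h v' w)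
    (hs1 : ∀ (a : A) (v w : V), h (a • v) w = σ a * h v w) (hsk : ∀ v w : V, h w v = -σ (h v w))
    (hb1 : ∀ i j, h (b (Sum.inl i)) (b (Sum.inr j)) = if i = j then 1 else 0)
    (hb2 : ∀ i j, h (b (Sum.inl i)) (b (Sum.inl j)) = 0)
    (hb3 : ∀ i j, h (b (Sum.inr i)) (b (Sum.inr j)) = 0)
    {J : Ideal A} (hJ : ∀ a ∈ J, σ a ∈ J) (v : V) :
    v ∈ J • (⊤ : Submodule A V) ↔ ∀ w, h v w ∈ J := by
  constructor
  · intro hv w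
    refine Submodule.smul_induction_on hv (fun a ha u _ => ?_) (fun v v' hv hv' => ?_)
    · rw [hs1]
      exact J.mul_mem_right _ (hJ a ha)
    · rw [hadd]
      exact J.add_mem hv hv'
  · intro hv
    rw [← b.sum_repr v]
    refine Submodule.sum_mem _ fun k _ => Submodule.smul_mem_smul ?_ Submodule.mem_top
    rcases k with j | j
    · rw [← hσ (b.repr v _), ← apply_basis_inr_of_symplectic hadd hs1 hb1 hb3]
      exact hJ _ (hv _)
    · have hrepr : b.repr v (Sum.inr j) = -σ (h v (b (Sum.inl j))) := by
        rw [apply_basis_inl_of_symplectic hadd hs1 hsk hb1 hb2, map_neg, hσ, neg_neg]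
      rw [hrepr]
      exact J.neg_mem (hJ _ (hv _))

end SymplecticBasis

namespace Aext

variable {R : Type} [CommRing R] {p : R} {ℓ : ℕ} {σ : Aext R p ℓ →ₐ[R] Aext R p ℓ}
  {V : Type*} [AddCommGroup V] [Module (Aext R p ℓ) V]

theorem forall_mem_span_pow_iff_forall_mem_span_piA_pow [IsLocalRing R]
    (hmax : IsLocalRing.maximalIdeal R = Ideal.span {p}) (hℓ : 1 ≤ ℓ) (hp : p ^ ℓ = 0)
    (hp' : p ^ (ℓ - 1) ≠ 0) (h2 : IsUnit (2 : R)) (hσ : σ (piA R p ℓ) = -piA R p ℓ)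
    {h : V → V → Aext R p ℓ} (hs2 : ∀ (a : Aext R p ℓ) (v w : V), h v (a • w) = a * h v w)
    {f : V → V → R} (hf : ∀ v w, algebraMap R (Aext R p ℓ) (2 * f v w) = h v w + σ (h v w))
    (k : ℕ) (v : V) :
    (∀ w, f v w ∈ Ideal.span {p} ^ (k + 1)) ↔
      ∀ w, h v w ∈ Ideal.span {piA R p ℓ} ^ (2 * k + 1) := by
  have hre : ∀ w x y,
      h v w = algebraMap R (Aext R p ℓ) x + algebraMap R (Aext R p ℓ) y * piA R p ℓ → f v w = x :=
    fun w x y hxy => eq_of_algebraMap_two_mul_eq hℓ hp h2 hσ (hxy ▸ hf v w)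
  simp only [Ideal.span_singleton_pow p, Ideal.mem_span_singleton]
  constructor
  · intro hv w
    obtain ⟨x, y, hxy⟩ := exists_eq_add_mul_piA (h v w)
    have hπw : h v (piA R p ℓ • w) =
        algebraMap R (Aext R p ℓ) (p * y) + algebraMap R (Aext R p ℓ) x * piA R p ℓ := by
      rw [hs2, hxy, map_mul]
      linear_combination algebraMap R (Aext R p ℓ) y * (piA_sq : piA R p ℓ ^ 2 = _)
    rw [hxy, add_mul_piA_mem_span_piA_pow_iff hmax hℓ hp hp', ← hre w x y hxy,
      ← hre _ _ _ hπw]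
    exact ⟨hv w, hv _⟩
  · intro hv w
    obtain ⟨x, y, hxy⟩ := exists_eq_add_mul_piA (h v w)
    have := hv w
    rw [hxy, add_mul_piA_mem_span_piA_pow_iff hmax hℓ hp hp'] at this
    exact hre w x y hxy ▸ this.1

theorem mem_span_piA_pow_two_mul_smul_top_iff [Module R V] [IsScalarTower R (Aext R p ℓ) V]
    (k : ℕ) (v : V) :
    v ∈ Ideal.span {piA R p ℓ} ^ (2 * k) • (⊤ : Submodule (Aext R p ℓ) V) ↔
      ∃ u : V, p ^ k • u = v := by
  rw [Ideal.span_singleton_pow, Submodule.ideal_span_singleton_smul,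
    Submodule.mem_smul_pointwise_iff_exists, pow_mul, piA_sq, ← map_pow]
  simp only [Submodule.mem_top, true_and, algebraMap_smul]

end Aext

theorem stmt8
    (hℓ : 1 ≤ ℓ)
    (hmax : IsLocalRing.maximalIdeal R = Ideal.span {p})
    (hnil : Ideal.span {p} ^ ℓ = (⊥ : Ideal R))
    (hnil' : Ideal.span {p} ^ (ℓ - 1) ≠ (⊥ : Ideal R))
    (hq : Nat.card (IsLocalRing.ResidueField R) = q)
    (hodd : Odd q)
    (σ : Aext R p ℓ →ₐ[R] Aext R p ℓ)
    (hσ : σ (piA R p ℓ) = - piA R p ℓ)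
    (V : Type) [AddCommGroup V] [Module (Aext R p ℓ) V] [Module R V]
    [IsScalarTower R (Aext R p ℓ) V]
    (n : ℕ)
    (b : Module.Basis (Fin n ⊕ Fin n) (Aext R p ℓ) V)
    (h : V → V → Aext R p ℓ)
    (hadd : ∀ v v' w : V, h (v + v') w = h v w + h v' w)
    (hs1 : ∀ (a : Aext R p ℓ) (v w : V), h (a • v) w = σ a * h v w)
    (hs2 : ∀ (a : Aext R p ℓ) (v w : V), h v (a • w) = a * h v w)
    (hsk : ∀ v w : V, h w v = - σ (h v w))
    (hb1 : ∀ i j, h (b (Sum.inl i)) (b (Sum.inr j)) = if i = j then 1 else 0)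
    (hb2 : ∀ i j, h (b (Sum.inl i)) (b (Sum.inl j)) = 0)
    (hb3 : ∀ i j, h (b (Sum.inr i)) (b (Sum.inr j)) = 0)
    (f : V → V → R)
    (hf : ∀ v w : V, algebraMap R (Aext R p ℓ) (2 * f v w) = h v w + σ (h v w))
    :
    (∀ i : ℕ, 1 ≤ i → ∀ v : V,
      v ∈ (Ideal.span {piA R p ℓ} ^ (2 * i - 1) • (⊤ : Submodule (Aext R p ℓ) V) :
        Submodule (Aext R p ℓ) V) ↔
      ∀ w : V, f v w ∈ Ideal.span {p} ^ i) ∧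
    (∀ j : ℕ, ∀ g : V ≃ₗ[R] V, (∀ x y : V, f (g x) (g y) = f x y) →
      ∀ v : V,
        v ∈ (Ideal.span {piA R p ℓ} ^ j • (⊤ : Submodule (Aext R p ℓ) V) :
          Submodule (Aext R p ℓ) V) →
        g v ∈ (Ideal.span {piA R p ℓ} ^ j • (⊤ : Submodule (Aext R p ℓ) V) :
          Submodule (Aext R p ℓ) V)) := by
  have hp : p ^ ℓ = 0 := by simpa [Ideal.span_singleton_pow] using hnil
  have hp' : p ^ (ℓ - 1) ≠ 0 := by simpa [Ideal.span_singleton_pow] using hnil'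
  have h2 : IsUnit (2 : R) := IsLocalRing.isUnit_two_of_odd_card_residueField (hq ▸ hodd)
  have hmem_odd (k : ℕ) (v : V) :
      v ∈ (Ideal.span {piA R p ℓ} ^ (2 * k + 1) • ⊤ : Submodule (Aext R p ℓ) V) ↔
        ∀ w, f v w ∈ Ideal.span {p} ^ (k + 1) :=
    (mem_smul_top_iff_forall_apply_mem (Aext.involutive_of_map_piA hσ) hadd hs1 hsk hb1 hb2 hb3
      (fun _ => Aext.map_mem_span_piA_pow hσ) v).trans
      (Aext.forall_mem_span_pow_iff_forall_mem_span_piA_pow hmax hℓ hp hp' h2 hσ hs2 hf k v).symm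
  refine ⟨fun i hi v => ?_, fun j g hg v hv => ?_⟩
  · obtain ⟨k, rfl⟩ := Nat.exists_eq_add_of_le' hi
    rw [show 2 * (k + 1) - 1 = 2 * k + 1 by omega]
    exact hmem_odd k v
  · obtain ⟨k, rfl | rfl⟩ := Nat.even_or_odd' j
    · obtain ⟨u, rfl⟩ := (Aext.mem_span_piA_pow_two_mul_smul_top_iff k v).mp hv
      exact (Aext.mem_span_piA_pow_two_mul_smul_top_iff k _).mpr ⟨g u, (map_smul g _ u).symm⟩
    · rw [hmem_odd] at hv ⊢
      intro w
      rw [← g.apply_symm_apply w, hg]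
      exact hv (g.symm w)
end
end

section
/- The set of values {h(u,u) : u ∈ V, u ∉ rV} equals S = {a ∈ A : a* = -a}. -/
open Polynomial

noncomputable section

variable (R : Type) [CommRing R] [IsLocalRing R] [IsPrincipalIdealRing R] [Finite R]
variable (p : R) (ℓ q : ℕ)

theorem stmt10
    (hℓ : 1 ≤ ℓ)
    (hmax : IsLocalRing.maximalIdeal R = Ideal.span {p})
    (hnil : Ideal.span {p} ^ ℓ = (⊥ : Ideal R))
    (hnil' : Ideal.span {p} ^ (ℓ - 1) ≠ (⊥ : Ideal R))
    (hq : Nat.card (IsLocalRing.ResidueField R) = q)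
    (hodd : Odd q)
    (σ : Aext R p ℓ →ₐ[R] Aext R p ℓ)
    (hσ : σ (piA R p ℓ) = - piA R p ℓ)
    (V : Type) [AddCommGroup V] [Module (Aext R p ℓ) V] [Module R V]
    [IsScalarTower R (Aext R p ℓ) V]
    (n : ℕ) (hn : 1 ≤ n)
    (b : Module.Basis (Fin n ⊕ Fin n) (Aext R p ℓ) V)
    (h : V → V → Aext R p ℓ)
    (hadd : ∀ v v' w : V, h (v + v') w = h v w + h v' w)
    (hs1 : ∀ (a : Aext R p ℓ) (v w : V), h (a • v) w = σ a * h v w)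
    (hs2 : ∀ (a : Aext R p ℓ) (v w : V), h v (a • w) = a * h v w)
    (hsk : ∀ v w : V, h w v = - σ (h v w))
    (hb1 : ∀ i j, h (b (Sum.inl i)) (b (Sum.inr j)) = if i = j then 1 else 0)
    (hb2 : ∀ i j, h (b (Sum.inl i)) (b (Sum.inl j)) = 0)
    (hb3 : ∀ i j, h (b (Sum.inr i)) (b (Sum.inr j)) = 0)
    :
    {a : Aext R p ℓ | ∃ u : V,
        u ∉ (Ideal.span {piA R p ℓ} • (⊤ : Submodule (Aext R p ℓ) V) :
          Submodule (Aext R p ℓ) V) ∧ h u u = a} =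
    {a : Aext R p ℓ | σ a = -a} := by
  classical
  set I : Ideal (Polynomial R) :=
    Ideal.span ({X ^ 2 - C p, X ^ (2 * ℓ - 1)} : Set (Polynomial R)) with hI
  -- p is in the maximal ideal
  have hp_mem : p ∈ IsLocalRing.maximalIdeal R := by
    rw [hmax]; exact Ideal.mem_span_singleton_self p
  -- a ring hom A → k killing π
  have hker : I ≤ RingHom.ker
      (eval₂RingHom (IsLocalRing.residue R) (0 : IsLocalRing.ResidueField R)) := by
    rw [hI, Ideal.span_le]
    rintro f (rfl | rfl)
    · simp only [SetLike.mem_coe, RingHom.mem_ker, coe_eval₂RingHom, eval₂_sub, eval₂_pow,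
        eval₂_X, eval₂_C]
      have : IsLocalRing.residue R p = 0 := Ideal.Quotient.eq_zero_iff_mem.mpr hp_mem
      rw [this]; ring
    · simp only [Set.mem_singleton_iff, SetLike.mem_coe, RingHom.mem_ker, coe_eval₂RingHom,
        eval₂_pow, eval₂_X]
      exact zero_pow (by omega)
  let ψ : Aext R p ℓ →+* IsLocalRing.ResidueField R :=
    Ideal.Quotient.lift I (eval₂RingHom (IsLocalRing.residue R) 0) (fun x hx => hker hx)
  have hA : Nontrivial (Aext R p ℓ) := ψ.domain_nontrivial
  -- π is nilpotent hence not a unit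
  have hπpow : (piA R p ℓ) ^ (2 * ℓ - 1) = 0 := by
    show (Ideal.Quotient.mk I X) ^ (2 * ℓ - 1) = 0
    rw [← map_pow, Ideal.Quotient.eq_zero_iff_mem]
    exact Ideal.subset_span (by simp)
  have hπ_not_unit : ¬ IsUnit (piA R p ℓ) := by
    intro hu
    have := hu.pow (2 * ℓ - 1)
    rw [hπpow] at this
    exact not_isUnit_zero this
  -- 2 is a unit in R hence in A
  have h2R : IsUnit (2 : R) := by
    by_contra h2
    have h2m : (2 : R) ∈ IsLocalRing.maximalIdeal R :=
      (IsLocalRing.mem_maximalIdeal _).mpr h2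
    have h2k : ((2 : ℕ) : IsLocalRing.ResidueField R) = 0 := by
      have : IsLocalRing.residue R 2 = 0 := Ideal.Quotient.eq_zero_iff_mem.mpr h2m
      simpa only [map_ofNat, Nat.cast_ofNat] using this
    haveI : Finite (IsLocalRing.ResidueField R) := Quotient.finite _
    haveI : Fintype (IsLocalRing.ResidueField R) := Fintype.ofFinite _
    have hchar : ringChar (IsLocalRing.ResidueField R) = 2 :=
      CharP.ringChar_of_prime_eq_zero Nat.prime_two h2k
    have heven := FiniteField.even_card_of_char_two hchar
    rw [← hq, Nat.card_eq_fintype_card, Nat.odd_iff] at hodd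
    omega
  have h2A : IsUnit (2 : Aext R p ℓ) := by
    have := h2R.map (algebraMap R (Aext R p ℓ))
    convert this using 1
    rw [map_ofNat]
  -- Now the set equality
  ext a
  simp only [Set.mem_setOf_eq]
  constructor
  · rintro ⟨u, -, rfl⟩
    exact neg_eq_iff_eq_neg.mp (hsk u u).symm
  · intro ha
    obtain ⟨w, hw⟩ := h2A
    set t : Aext R p ℓ := ((w⁻¹ : _) : Aext R p ℓ) with htdef
    have ht : 2 * t = 1 := by rw [← hw, htdef]; exact w.mul_inv
    have hσ2 : σ (2 : Aext R p ℓ) = 2 := map_ofNat σ 2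
    have hσt : σ t = t := by
      have ht' : 2 * σ t = 1 := by
        have := congrArg σ ht
        rw [map_mul, hσ2, map_one] at this
        exact this
      linear_combination (-σ t) * ht + t * ht'
    set y : Aext R p ℓ := t * a with hydef
    set e : V := b (Sum.inl ⟨0, hn⟩) with hedef
    set f : V := b (Sum.inr ⟨0, hn⟩) with hfdef
    have hee : h e e = 0 := hb2 _ _
    have hff : h f f = 0 := hb3 _ _
    have hef : h e f = 1 := by rw [hedef, hfdef, hb1, if_pos rfl]
    have hfe : h f e = -1 := by rw [hsk, hef, map_one]
    have hadd' : ∀ v w w' : V, h v (w + w') = h v w + h v w' := by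
      intro v w w'
      rw [hsk (w + w') v, hadd, map_add, neg_add, ← hsk, ← hsk]
    have hσy : σ y = -(t * a) := by
      rw [hydef, map_mul, hσt, ha]; ring
    refine ⟨e + y • f, ?_, ?_⟩
    · -- not in π V
      intro hmem
      have key : ∀ w ∈ (Ideal.span {piA R p ℓ} • (⊤ : Submodule (Aext R p ℓ) V) :
          Submodule (Aext R p ℓ) V), h w f ∈ Ideal.span {piA R p ℓ} := by
        intro w hw
        refine Submodule.smul_induction_on hw ?_ ?_
        · intro r hr x _
          rw [hs1]
          obtain ⟨c, hc⟩ := Ideal.mem_span_singleton.mp hr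
          have hhc : σ r = piA R p ℓ * (-(σ c) * h x f) → True := fun _ => trivial
          have hsr : σ r * h x f = piA R p ℓ * (-(σ c) * h x f) := by
            rw [hc, map_mul, hσ]; ring
          rw [hsr]
          exact Ideal.mul_mem_right _ _ (Ideal.mem_span_singleton_self _)
        · intro x y hx hy
          rw [hadd]
          exact Ideal.add_mem _ hx hy
      have h1 : h (e + y • f) f = 1 := by
        rw [hadd, hs1, hef, hff]; ring
      have := key _ hmem
      rw [h1] at this
      obtain ⟨c, hc⟩ := Ideal.mem_span_singleton.mp this
      exact hπ_not_unit (IsUnit.of_mul_eq_one _ hc.symm)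
    · -- h u u = a
      have expand : h (e + y • f) (e + y • f) = y - σ y := by
        simp only [hadd, hadd', hs1, hs2, hee, hef, hfe, hff]
        ring
      rw [expand, hσy, hydef]
      linear_combination a * ht
end
end

section
/- The unitary group U(V,h) has exactly |S| = q^{ℓ-1} orbits on V∖rV, where two vectors u, v of V∖rV lie in the same U-orbit if and only if h(u,u) = h(v,v). -/
open Polynomial

noncomputable section

variable (R : Type) [CommRing R] [IsLocalRing R] [IsPrincipalIdealRing R] [Finite R]
variable (p : R) (ℓ q : ℕ)

namespace Stmt12Aux

variable {R : Type} [CommRing R]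

/-- Odd-coefficient evaluation `f ↦ Σ_k coeff f (2k+1) p^k`. -/
def phiO (p : R) : R[X] →ₗ[R] R :=
  Polynomial.lsum fun n => (if Odd n then p ^ (n / 2) else 0) • LinearMap.id

/-- Even-coefficient evaluation `f ↦ Σ_k coeff f (2k) p^k`. -/
def phiE (p : R) : R[X] →ₗ[R] R :=
  Polynomial.lsum fun n => (if Even n then p ^ (n / 2) else 0) • LinearMap.id

lemma phiO_monomial (p : R) (n : ℕ) (a : R) :
    phiO p (monomial n a) = if Odd n then p ^ (n / 2) * a else 0 := by
  rw [phiO, Polynomial.lsum_apply, Polynomial.sum_monomial_index]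
  · simp only [LinearMap.smul_apply, LinearMap.id_apply, smul_eq_mul]
    split_ifs <;> simp
  · simp

lemma phiE_monomial (p : R) (n : ℕ) (a : R) :
    phiE p (monomial n a) = if Even n then p ^ (n / 2) * a else 0 := by
  rw [phiE, Polynomial.lsum_apply, Polynomial.sum_monomial_index]
  · simp only [LinearMap.smul_apply, LinearMap.id_apply, smul_eq_mul]
    split_ifs <;> simp
  · simp

lemma phiO_mul_sub (p : R) : ∀ u : R[X], phiO p (u * (X ^ 2 - C p)) = 0 := by
  intro u
  induction u using Polynomial.induction_on' with
  | add u v hu hv => rw [add_mul, map_add, hu, hv, add_zero]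
  | monomial n a =>
      rw [mul_sub, X_pow_eq_monomial, monomial_mul_monomial, mul_comm (monomial n a) (C p), C_mul_monomial,
        map_sub, phiO_monomial, phiO_monomial]
      have he : (n + 2) / 2 = n / 2 + 1 := by omega
      have ho : Odd (n + 2) ↔ Odd n := by
        simp only [Nat.odd_iff]; omega
      rw [he]
      by_cases hodd : Odd n
      · rw [if_pos (ho.mpr hodd), if_pos hodd, pow_succ]; ring
      · rw [if_neg (fun hc => hodd (ho.mp hc)), if_neg hodd, sub_zero]

lemma phiE_mul_sub (p : R) : ∀ u : R[X], phiE p (u * (X ^ 2 - C p)) = 0 := by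
  intro u
  induction u using Polynomial.induction_on' with
  | add u v hu hv => rw [add_mul, map_add, hu, hv, add_zero]
  | monomial n a =>
      rw [mul_sub, X_pow_eq_monomial, monomial_mul_monomial, mul_comm (monomial n a) (C p), C_mul_monomial,
        map_sub, phiE_monomial, phiE_monomial]
      have he : (n + 2) / 2 = n / 2 + 1 := by omega
      have ho : Even (n + 2) ↔ Even n := by
        simp only [Nat.even_iff]; omega
      rw [he]
      by_cases heven : Even n
      · rw [if_pos (ho.mpr heven), if_pos heven, pow_succ]; ring
      · rw [if_neg (fun hc => heven (ho.mp hc)), if_neg heven, sub_zero]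

lemma phiO_mul_pow (p : R) (ℓ : ℕ) (hl : 1 ≤ ℓ) :
    ∀ u : R[X], phiO p (u * X ^ (2 * ℓ - 1)) ∈ Ideal.span {p ^ (ℓ - 1)} := by
  intro u
  induction u using Polynomial.induction_on' with
  | add u v hu hv => rw [add_mul, map_add]; exact add_mem hu hv
  | monomial n a =>
      rw [X_pow_eq_monomial, monomial_mul_monomial, mul_one, phiO_monomial]
      split_ifs with hodd
      · refine Ideal.mem_span_singleton.mpr (dvd_mul_of_dvd_left (pow_dvd_pow p ?_) a)
        omega
      · exact zero_mem _

lemma phiE_mul_pow (p : R) (ℓ : ℕ) (hl : 1 ≤ ℓ) (hpl : p ^ ℓ = 0) :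
    ∀ u : R[X], phiE p (u * X ^ (2 * ℓ - 1)) = 0 := by
  intro u
  induction u using Polynomial.induction_on' with
  | add u v hu hv => rw [add_mul, map_add, hu, hv, add_zero]
  | monomial n a =>
      rw [X_pow_eq_monomial, monomial_mul_monomial, mul_one, phiE_monomial]
      split_ifs with heven
      · have hle : ℓ ≤ (n + (2 * ℓ - 1)) / 2 := by
          rw [Nat.even_iff] at heven; omega
        have : p ^ ((n + (2 * ℓ - 1)) / 2) = p ^ ℓ * p ^ ((n + (2 * ℓ - 1)) / 2 - ℓ) := by
          rw [← pow_add]; congr 1; omega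
        rw [this, hpl, zero_mul, zero_mul]
      · rfl

lemma phiO_I_mem (p : R) (ℓ : ℕ) (hl : 1 ≤ ℓ) {f : R[X]}
    (hf : f ∈ Ideal.span ({X ^ 2 - C p, X ^ (2 * ℓ - 1)} : Set R[X])) :
    phiO p f ∈ Ideal.span {p ^ (ℓ - 1)} := by
  obtain ⟨u, v, huv⟩ := Ideal.mem_span_pair.mp hf
  rw [← huv, map_add, phiO_mul_sub, zero_add]
  exact phiO_mul_pow p ℓ hl v

lemma phiE_I_eq_zero (p : R) (ℓ : ℕ) (hl : 1 ≤ ℓ) (hpl : p ^ ℓ = 0) {f : R[X]}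
    (hf : f ∈ Ideal.span ({X ^ 2 - C p, X ^ (2 * ℓ - 1)} : Set R[X])) :
    phiE p f = 0 := by
  obtain ⟨u, v, huv⟩ := Ideal.mem_span_pair.mp hf
  rw [← huv, map_add, phiE_mul_sub, zero_add, phiE_mul_pow p ℓ hl hpl]


lemma card_quot (R : Type) [CommRing R] [IsLocalRing R] [Finite R] (p : R) (q : ℕ)
    (hmax : IsLocalRing.maximalIdeal R = Ideal.span {p})
    (hq : Nat.card (IsLocalRing.ResidueField R) = q) :
    ∀ k : ℕ, p ^ k ≠ 0 → Nat.card (R ⧸ Ideal.span {p ^ k}) = q ^ k := by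
  intro k
  induction k with
  | zero =>
      intro _
      rw [pow_zero, Ideal.span_singleton_one]
      haveI : Subsingleton (R ⧸ (⊤ : Ideal R)) :=
        Submodule.Quotient.subsingleton_iff.mpr rfl
      rw [Nat.card_of_subsingleton (0 : R ⧸ (⊤ : Ideal R)), pow_zero]
  | succ k ih =>
      intro hpk1
      have hpk : p ^ k ≠ 0 := fun hc => hpk1 (by rw [pow_succ, hc, zero_mul])
      set I1 : Ideal R := Ideal.span {p ^ (k + 1)} with hI1
      set Ik : Ideal R := Ideal.span {p ^ k} with hIk
      let α : R →ₗ[R] R ⧸ I1 :=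
        (Submodule.mkQ (I1 : Submodule R R)).comp (LinearMap.toSpanSingleton R R (p ^ k))
      have hker : LinearMap.ker α = (Ideal.span {p} : Ideal R) := by
        ext r
        simp only [LinearMap.mem_ker, LinearMap.coe_comp, Function.comp_apply,
          LinearMap.toSpanSingleton_apply, Submodule.mkQ_apply, Submodule.Quotient.mk_eq_zero,
          smul_eq_mul, α]
        constructor
        · intro hmem
          obtain ⟨t, ht⟩ := Ideal.mem_span_singleton'.mp hmem
          by_contra hr
          have hru : IsUnit (r - t * p) := by
            by_contra hnu
            have h1 : r - t * p ∈ IsLocalRing.maximalIdeal R :=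
              (IsLocalRing.mem_maximalIdeal _).mpr hnu
            have h2 : t * p ∈ IsLocalRing.maximalIdeal R := by
              rw [hmax]
              exact Ideal.mul_mem_left _ t (Ideal.mem_span_singleton_self p)
            have h3 : r ∈ IsLocalRing.maximalIdeal R := by
              have := add_mem h1 h2
              simpa using this
            rw [hmax] at h3
            exact hr h3
          have hz : (r - t * p) * p ^ k = 0 := by
            calc (r - t * p) * p ^ k = r * p ^ k - t * p ^ (k + 1) := by ring
            _ = 0 := by rw [← ht]; ring
          exact hpk ((IsUnit.mul_right_eq_zero hru).mp hz)
        · intro hmem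
          obtain ⟨t, ht⟩ := Ideal.mem_span_singleton'.mp hmem
          refine Ideal.mem_span_singleton'.mpr ⟨t, ?_⟩
          rw [← ht]; ring
      have hrange : LinearMap.range α = Submodule.map (Submodule.mkQ (I1 : Submodule R R)) (Ik : Submodule R R) := by
        rw [LinearMap.range_comp, ← LinearMap.span_singleton_eq_range, hIk,
          Ideal.submodule_span_eq]
      haveI : Finite (R ⧸ I1) := Finite.of_surjective _ Ideal.Quotient.mk_surjective
      haveI : Finite (R ⧸ Ik) := Finite.of_surjective _ Ideal.Quotient.mk_surjective
      -- the kernel piece has cardinality q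
      have hcardK : Nat.card (Submodule.map (Submodule.mkQ (I1 : Submodule R R)) (Ik : Submodule R R)) = q := by
        rw [← hrange, ← Nat.card_congr (LinearMap.quotKerEquivRange α).toEquiv, hker]
        have : Nat.card (R ⧸ (Ideal.span {p} : Ideal R)) =
            Nat.card (IsLocalRing.ResidueField R) :=
          (Nat.card_congr (Ideal.quotEquivOfEq hmax).toEquiv).symm
        rw [this, hq]
      have hle : I1 ≤ Ik := by
        rw [hI1, hIk]
        exact Ideal.span_singleton_le_span_singleton.mpr ⟨p, pow_succ p k⟩
      let β : (R ⧸ I1) →ₗ[R] R ⧸ Ik :=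
        Submodule.mapQ (I1 : Submodule R R) (Ik : Submodule R R) LinearMap.id hle
      have hβ : ∀ x : R, β (Submodule.Quotient.mk x) = Submodule.Quotient.mk x := fun x =>
        rfl
      have hβsurj : Function.Surjective β := by
        intro y
        obtain ⟨x, rfl⟩ := Submodule.mkQ_surjective _ y
        exact ⟨Submodule.Quotient.mk x, hβ x⟩
      have hkerβ : LinearMap.ker β = Submodule.map (Submodule.mkQ (I1 : Submodule R R)) (Ik : Submodule R R) := by
        ext y
        obtain ⟨x, rfl⟩ := Submodule.mkQ_surjective _ y
        simp only [LinearMap.mem_ker, Submodule.mkQ_apply, hβ, Submodule.Quotient.mk_eq_zero]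
        constructor
        · intro hx
          exact Submodule.mem_map_of_mem hx
        · rintro ⟨z, hz, hzx⟩
          have : x - z ∈ I1 := by
            rw [← Submodule.Quotient.eq]
            exact hzx.symm
          have := hle this
          have hx : x = (x - z) + z := by ring
          rw [hx]
          exact add_mem this hz
      calc Nat.card (R ⧸ I1)
          = Nat.card (LinearMap.ker β) * Nat.card ((R ⧸ I1) ⧸ (LinearMap.ker β)) :=
            Submodule.card_eq_card_quotient_mul_card _
        _ = q ^ (k + 1) := by
            rw [Nat.card_congr (LinearMap.quotKerEquivOfSurjective β hβsurj).toEquiv,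
              hkerβ, hcardK, ih hpk, pow_succ, mul_comm]

end Stmt12Aux

set_option maxHeartbeats 2000000

theorem stmt12
    (hℓ : 1 ≤ ℓ)
    (hmax : IsLocalRing.maximalIdeal R = Ideal.span {p})
    (hnil : Ideal.span {p} ^ ℓ = (⊥ : Ideal R))
    (hnil' : Ideal.span {p} ^ (ℓ - 1) ≠ (⊥ : Ideal R))
    (hq : Nat.card (IsLocalRing.ResidueField R) = q)
    (hodd : Odd q)
    (σ : Aext R p ℓ →ₐ[R] Aext R p ℓ)
    (hσ : σ (piA R p ℓ) = - piA R p ℓ)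
    (V : Type) [AddCommGroup V] [Module (Aext R p ℓ) V] [Module R V]
    [IsScalarTower R (Aext R p ℓ) V]
    (n : ℕ) (hn : 1 ≤ n)
    (b : Module.Basis (Fin n ⊕ Fin n) (Aext R p ℓ) V)
    (h : V → V → Aext R p ℓ)
    (hadd : ∀ v v' w : V, h (v + v') w = h v w + h v' w)
    (hs1 : ∀ (a : Aext R p ℓ) (v w : V), h (a • v) w = σ a * h v w)
    (hs2 : ∀ (a : Aext R p ℓ) (v w : V), h v (a • w) = a * h v w)
    (hsk : ∀ v w : V, h w v = - σ (h v w))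
    (hb1 : ∀ i j, h (b (Sum.inl i)) (b (Sum.inr j)) = if i = j then 1 else 0)
    (hb2 : ∀ i j, h (b (Sum.inl i)) (b (Sum.inl j)) = 0)
    (hb3 : ∀ i j, h (b (Sum.inr i)) (b (Sum.inr j)) = 0)
    (hclass : ∀ u v : V,
      u ∉ (Ideal.span {piA R p ℓ} • (⊤ : Submodule (Aext R p ℓ) V) :
        Submodule (Aext R p ℓ) V) →
      v ∉ (Ideal.span {piA R p ℓ} • (⊤ : Submodule (Aext R p ℓ) V) :
        Submodule (Aext R p ℓ) V) →
      ((∃ g : V ≃ₗ[Aext R p ℓ] V, (∀ x y : V, h (g x) (g y) = h x y) ∧ g u = v) ↔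
        h u u = h v v)) :
    Nat.card {a : Aext R p ℓ // σ a = -a} = q ^ (ℓ - 1) ∧
    ∃ T : Finset V,
      (∀ u ∈ T, u ∉ (Ideal.span {piA R p ℓ} • (⊤ : Submodule (Aext R p ℓ) V) :
        Submodule (Aext R p ℓ) V)) ∧
      (∀ v : V,
        v ∉ (Ideal.span {piA R p ℓ} • (⊤ : Submodule (Aext R p ℓ) V) :
          Submodule (Aext R p ℓ) V) →
        ∃! u : V, u ∈ T ∧
          ∃ g : V ≃ₗ[Aext R p ℓ] V, (∀ x y : V, h (g x) (g y) = h x y) ∧ g u = v) ∧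
      T.card = q ^ (ℓ - 1) := by
  classical
  set I : Ideal (Polynomial R) :=
    Ideal.span ({X ^ 2 - C p, X ^ (2 * ℓ - 1)} : Set (Polynomial R)) with hI
  set π : (Aext R p ℓ) := piA R p ℓ with hπ
  -- basic ring facts
  have hpl : p ^ ℓ = 0 := by
    have := Ideal.pow_mem_pow (Ideal.mem_span_singleton_self p) ℓ
    rw [hnil] at this
    exact Ideal.mem_bot.mp this
  have hpl' : p ^ (ℓ - 1) ≠ 0 := by
    intro hc
    apply hnil'
    rw [Ideal.span_singleton_pow, hc]
    exact Ideal.span_singleton_eq_bot.mpr rfl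
  have hπX : π = Ideal.Quotient.mk I X := rfl
  have halg : ∀ r : R, algebraMap R (Aext R p ℓ) r = Ideal.Quotient.mk I (C r) := fun r => rfl
  have hsq : π ^ 2 = algebraMap R (Aext R p ℓ) p := by
    rw [hπX, ← map_pow, halg, Ideal.Quotient.mk_eq_mk_iff_sub_mem]
    exact Ideal.subset_span (Set.mem_insert _ _)
  have hpow_even : ∀ k : ℕ, π ^ (2 * k) = algebraMap R (Aext R p ℓ) (p ^ k) := by
    intro k
    induction k with
    | zero => simp
    | succ k ih =>
        have h2 : 2 * (k + 1) = 2 * k + 2 := by ring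
        rw [h2, pow_add, ih, hsq, ← map_mul, ← pow_succ]
  have hpow_odd : ∀ k : ℕ, π ^ (2 * k + 1) = algebraMap R (Aext R p ℓ) (p ^ k) * π := by
    intro k
    rw [pow_succ, hpow_even]
  have hπnil : π ^ (2 * ℓ - 1) = 0 := by
    rw [hπX, ← map_pow, Ideal.Quotient.eq_zero_iff_mem]
    exact Ideal.subset_span (Set.mem_insert_of_mem _ rfl)
  have hone : (1 : (Aext R p ℓ)) ≠ 0 := by
    intro hc
    have h1 : (1 : Polynomial R) ∈ I := by
      rw [← Ideal.Quotient.eq_zero_iff_mem]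
      exact hc
    have h2 := Stmt12Aux.phiE_I_eq_zero p ℓ hℓ hpl h1
    rw [show (1 : Polynomial R) = monomial 0 1 from (monomial_zero_one).symm,
      Stmt12Aux.phiE_monomial] at h2
    norm_num at h2
  -- 2 is invertible
  have h2unit : IsUnit (2 : R) := by
    by_contra hnu
    have h2m : (2 : R) ∈ IsLocalRing.maximalIdeal R := (IsLocalRing.mem_maximalIdeal _).mpr hnu
    have hres : (2 : IsLocalRing.ResidueField R) = 0 := by
      have h0 : IsLocalRing.residue R 2 = 0 := Ideal.Quotient.eq_zero_iff_mem.mpr h2m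
      rw [map_ofNat] at h0
      exact h0
    have hsm : (2 : ℕ) • (1 : IsLocalRing.ResidueField R) = 0 := by
      rw [nsmul_eq_mul, mul_one, Nat.cast_ofNat, hres]
    have hdvd2 : addOrderOf (1 : IsLocalRing.ResidueField R) ∣ 2 :=
      addOrderOf_dvd_iff_nsmul_eq_zero.mpr hsm
    have hdvdq : addOrderOf (1 : IsLocalRing.ResidueField R) ∣ q :=
      hq ▸ addOrderOf_dvd_natCard (1 : IsLocalRing.ResidueField R)
    rcases (Nat.dvd_prime Nat.prime_two).mp hdvd2 with h1 | h1
    · exact one_ne_zero (AddMonoid.addOrderOf_eq_one_iff.mp h1)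
    · rw [h1] at hdvdq
      obtain ⟨m, hm⟩ := hodd
      obtain ⟨tq, htq⟩ := hdvdq
      omega
  obtain ⟨t, ht2⟩ := isUnit_iff_exists_inv.mp h2unit
  -- the linear map s ↦ s • π
  set Φ : R →ₗ[R] (Aext R p ℓ) := LinearMap.toSpanSingleton R (Aext R p ℓ) π with hΦ
  have hΦapp : ∀ s : R, Φ s = s • π := fun s => rfl
  have hsmulA : ∀ (r : R) (x : (Aext R p ℓ)), r • x = algebraMap R (Aext R p ℓ) r * x := fun r x =>
    Algebra.smul_def r x
  have hsmul_mk : ∀ (s : R) (f : Polynomial R),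
      s • (Ideal.Quotient.mk I f) = Ideal.Quotient.mk I (C s * f) := by
    intro s f
    rw [show s • (Ideal.Quotient.mk I f) = Ideal.Quotient.mk I (s • f) from rfl,
      Polynomial.smul_eq_C_mul]
  have hmon : ∀ (m : ℕ) (a : R), Ideal.Quotient.mk I (monomial m a) = a • π ^ m := by
    intro m a
    rw [← C_mul_X_pow_eq_monomial, ← hsmul_mk, map_pow, ← hπX]
  have hkerΦ : LinearMap.ker Φ = (Ideal.span {p ^ (ℓ - 1)} : Ideal R) := by
    ext s
    simp only [LinearMap.mem_ker, hΦapp]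
    constructor
    · intro hz
      rw [hπX, hsmul_mk] at hz
      have hmem : C s * X ∈ I := Ideal.Quotient.eq_zero_iff_mem.mp hz
      have := Stmt12Aux.phiO_I_mem p ℓ hℓ hmem
      rw [C_mul_X_eq_monomial, Stmt12Aux.phiO_monomial, if_pos odd_one,
        show (1 : ℕ) / 2 = 0 from rfl, pow_zero, one_mul] at this
      exact this
    · intro hs
      obtain ⟨u, hu⟩ := Ideal.mem_span_singleton'.mp hs
      have hz : (p ^ (ℓ - 1)) • π = 0 := by
        rw [hπX, hsmul_mk, Ideal.Quotient.eq_zero_iff_mem]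
        obtain ⟨u2, hu2⟩ := sub_dvd_pow_sub_pow (X ^ 2 : Polynomial R) (C p) (ℓ - 1)
        refine Ideal.mem_span_pair.mpr ⟨-(u2 * X), 1, ?_⟩
        have h2l : 2 * ℓ - 1 = 2 * (ℓ - 1) + 1 := by omega
        rw [h2l]
        have hXp : (X : Polynomial R) ^ (2 * (ℓ - 1) + 1) = (X ^ 2) ^ (ℓ - 1) * X := by
          rw [pow_succ, pow_mul]
        rw [hXp, one_mul, map_pow]
        linear_combination X * hu2
      rw [← hu, mul_smul, hz, smul_zero]
  have hkey : ∀ a : (Aext R p ℓ), a - σ a ∈ LinearMap.range Φ := by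
    intro a
    obtain ⟨f, rfl⟩ := Ideal.Quotient.mk_surjective a
    induction f using Polynomial.induction_on' with
    | add u v hu hv =>
        rw [map_add, map_add]
        have heq : Ideal.Quotient.mk I u + Ideal.Quotient.mk I v -
            (σ (Ideal.Quotient.mk I u) + σ (Ideal.Quotient.mk I v)) =
            (Ideal.Quotient.mk I u - σ (Ideal.Quotient.mk I u)) +
            (Ideal.Quotient.mk I v - σ (Ideal.Quotient.mk I v)) := by ring
        rw [heq]
        exact add_mem hu hv
    | monomial m a =>
        rw [hmon, show σ (a • π ^ m) = a • σ (π ^ m) from map_smul σ a (π ^ m), map_pow, hσ]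
        rcases Nat.even_or_odd m with he | ho
        · have e2 : (-π : (Aext R p ℓ)) ^ m = π ^ m := he.neg_pow π
          rw [e2, sub_self]
          exact zero_mem _
        · have e2 : (-π : (Aext R p ℓ)) ^ m = -(π ^ m) := ho.neg_pow π
          rw [e2, show a • (-(π ^ m)) = -(a • π ^ m) from smul_neg a (π ^ m), sub_neg_eq_add]
          obtain ⟨k, hk⟩ := ho
          have e1 : algebraMap R (Aext R p ℓ) (p ^ k) * π = (p ^ k) • π := (Algebra.smul_def _ π).symm
          have hx : a • π ^ m = Φ (a * p ^ k) := by
            rw [hk, hpow_odd k, e1]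
            exact smul_smul a (p ^ k) π
          rw [hx]
          exact add_mem ⟨a * p ^ k, rfl⟩ ⟨a * p ^ k, rfl⟩
  have hrangeS : ∀ a : (Aext R p ℓ), (σ a = -a) ↔ a ∈ LinearMap.range Φ := by
    intro a
    constructor
    · intro ha
      have hmem := hkey a
      rw [ha, sub_neg_eq_add] at hmem
      have haa : a = t • (a + a) :=
        calc a = (1 : R) • a := (one_smul R a).symm
        _ = (t + t) • a := by rw [show t + t = 2 * t from (two_mul t).symm, ht2]
        _ = t • a + t • a := add_smul t t a
        _ = t • (a + a) := (smul_add t a a).symm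
      rw [haa]
      exact Submodule.smul_mem _ t hmem
    · rintro ⟨s, rfl⟩
      rw [hΦapp s]
      calc σ (s • π) = s • σ π := map_smul σ s π
      _ = s • (-π) := by rw [hσ]
      _ = -(s • π) := smul_neg s π
  have hcard1 : Nat.card {a : (Aext R p ℓ) // σ a = -a} = q ^ (ℓ - 1) := by
    have e1 : {a : (Aext R p ℓ) // σ a = -a} ≃ LinearMap.range Φ :=
      Equiv.subtypeEquivRight (fun a => hrangeS a)
    rw [Nat.card_congr e1, ← Nat.card_congr (LinearMap.quotKerEquivRange Φ).toEquiv, hkerΦ]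
    exact Stmt12Aux.card_quot R p q hmax hq (ℓ - 1) hpl'
  -- second-argument additivity
  have hadd2 : ∀ (v w w' : V), h v (w + w') = h v w + h v w' := by
    intro v w w'
    rw [hsk (w + w') v, hadd, map_add, neg_add, ← hsk w v, ← hsk w' v]
  set i0 : Fin n := ⟨0, hn⟩ with hi0
  set c : (Aext R p ℓ) := algebraMap R (Aext R p ℓ) t with hc
  have hcc : c + c = 1 := by
    rw [hc, ← map_add, ← two_mul, ht2, map_one]
  have hσc : σ c = c := σ.commutes t
  have hef : h (b (Sum.inl i0)) (b (Sum.inr i0)) = 1 := by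
    rw [hb1 i0 i0, if_pos rfl]
  have hfe : h (b (Sum.inr i0)) (b (Sum.inl i0)) = -1 := by
    rw [hsk (b (Sum.inl i0)) (b (Sum.inr i0)), hef, map_one]
  have hval : ∀ x : (Aext R p ℓ),
      h (b (Sum.inl i0) + x • b (Sum.inr i0)) (b (Sum.inl i0) + x • b (Sum.inr i0))
        = x - σ x := by
    intro x
    rw [hadd, hadd2, hadd2, hs2, hs1, hs1, hs2, hb2 i0 i0, hef, hfe, hb3 i0 i0]
    ring
  have hvalS : ∀ a : (Aext R p ℓ), σ a = -a →
      h (b (Sum.inl i0) + (c * a) • b (Sum.inr i0))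
        (b (Sum.inl i0) + (c * a) • b (Sum.inr i0)) = a := by
    intro a ha
    rw [hval, map_mul, hσc, ha]
    have hr : c * a - c * -a = (c + c) * a := by ring
    rw [hr, hcc, one_mul]
  have honeπ : (1 : (Aext R p ℓ)) ∉ Ideal.span {π} := by
    intro hmem
    obtain ⟨c', hc'⟩ := Ideal.mem_span_singleton'.mp hmem
    apply hone
    calc (1 : (Aext R p ℓ)) = 1 ^ (2 * ℓ - 1) := (one_pow _).symm
    _ = (c' * π) ^ (2 * ℓ - 1) := by rw [hc']
    _ = c' ^ (2 * ℓ - 1) * π ^ (2 * ℓ - 1) := mul_pow _ _ _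
    _ = 0 := by rw [hπnil, mul_zero]
  have hnotin : ∀ a : (Aext R p ℓ),
      b (Sum.inl i0) + (c * a) • b (Sum.inr i0) ∉
        (Ideal.span {π} • (⊤ : Submodule (Aext R p ℓ) V) : Submodule (Aext R p ℓ) V) := by
    intro a hmem
    have h1 : (b.coord (Sum.inl i0)) (b (Sum.inl i0) + (c * a) • b (Sum.inr i0)) ∈
        Submodule.map (b.coord (Sum.inl i0)) (Ideal.span {π} • (⊤ : Submodule (Aext R p ℓ) V)) :=
      Submodule.mem_map_of_mem hmem
    rw [Submodule.map_smul''] at h1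
    have hle2 : Ideal.span {π} • (Submodule.map (b.coord (Sum.inl i0)) ⊤) ≤
        (Ideal.span {π} : Submodule (Aext R p ℓ) (Aext R p ℓ)) :=
      Submodule.smul_le.mpr (fun r hr m _ => by
        rw [smul_eq_mul]; exact Ideal.mul_mem_right m _ hr)
    have h3 := hle2 h1
    have hφ : (b.coord (Sum.inl i0)) (b (Sum.inl i0) + (c * a) • b (Sum.inr i0)) = 1 := by
      simp [Module.Basis.coord_apply, Module.Basis.repr_self, Finsupp.single_apply]
    rw [hφ] at h3
    exact honeπ h3
  have hAfin : Finite (Aext R p ℓ) := by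
    apply Finite.of_surjective (fun rs : R × R => algebraMap R (Aext R p ℓ) rs.1 + rs.2 • π)
    intro a
    obtain ⟨g, rfl⟩ := Ideal.Quotient.mk_surjective a
    induction g using Polynomial.induction_on' with
    | add u v hu hv =>
        obtain ⟨⟨r1, s1⟩, h1⟩ := hu
        obtain ⟨⟨r2, s2⟩, h2⟩ := hv
        refine ⟨(r1 + r2, s1 + s2), ?_⟩
        simp only at h1 h2 ⊢
        rw [map_add (Ideal.Quotient.mk I), ← h1, ← h2, map_add,
          show (s1 + s2) • π = s1 • π + s2 • π from add_smul s1 s2 π]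
        abel
    | monomial m a =>
        rcases Nat.even_or_odd m with he | ho
        · obtain ⟨k, hk⟩ := he
          refine ⟨(a * p ^ k, 0), ?_⟩
          simp only
          rw [show (0 : R) • π = 0 from zero_smul R π, add_zero, hmon,
            show m = 2 * k from by omega, hpow_even, hsmulA, ← map_mul]
        · obtain ⟨k, hk⟩ := ho
          refine ⟨(0, a * p ^ k), ?_⟩
          simp only
          rw [map_zero, zero_add, hmon, hk, hpow_odd k,
            show algebraMap R (Aext R p ℓ) (p ^ k) * π = (p ^ k) • π from (Algebra.smul_def _ π).symm]
          exact (smul_smul a (p ^ k) π).symm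
  have hSfinite : ({x : (Aext R p ℓ) | σ x = -x}).Finite := Set.toFinite _
  refine ⟨hcard1,
    (hSfinite.toFinset.image fun a => b (Sum.inl i0) + (c * a) • b (Sum.inr i0)),
    ?_, ?_, ?_⟩
  · intro u hu
    obtain ⟨a, _, rfl⟩ := Finset.mem_image.mp hu
    exact hnotin a
  · intro v hv
    have hvS : σ (h v v) = -(h v v) := by linear_combination hsk v v
    refine ⟨b (Sum.inl i0) + (c * h v v) • b (Sum.inr i0),
      ⟨Finset.mem_image_of_mem _ (hSfinite.mem_toFinset.mpr hvS),
       (hclass _ v (hnotin _) hv).mpr (hvalS _ hvS)⟩, ?_⟩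
    rintro u' ⟨hu'T, hg'⟩
    obtain ⟨a', ha'S, rfl⟩ := Finset.mem_image.mp hu'T
    have ha' : σ a' = -a' := hSfinite.mem_toFinset.mp ha'S
    have hvv := (hclass _ v (hnotin a') hv).mp hg'
    rw [hvalS a' ha'] at hvv
    rw [hvv]
  · have hinj : Set.InjOn (fun a => b (Sum.inl i0) + (c * a) • b (Sum.inr i0))
        ↑hSfinite.toFinset := by
      intro a1 _ a2 _ hww
      simp only at hww
      have heq : (c * a1) • b (Sum.inr i0) = (c * a2) • b (Sum.inr i0) :=
        add_left_cancel hww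
      have h4 := congrArg (b.coord (Sum.inr i0)) heq
      simp only [map_smul, Module.Basis.coord_apply, Module.Basis.repr_self, Finsupp.single_eq_same,
        smul_eq_mul, mul_one] at h4
      calc a1 = 1 * a1 := (one_mul a1).symm
      _ = (c + c) * a1 := by rw [hcc]
      _ = c * a1 + c * a1 := add_mul c c a1
      _ = c * a2 + c * a2 := by rw [h4]
      _ = (c + c) * a2 := (add_mul c c a2).symm
      _ = 1 * a2 := by rw [hcc]
      _ = a2 := one_mul a2
    rw [Finset.card_image_of_injOn hinj,
      ← Set.ncard_eq_toFinset_card ({x : (Aext R p ℓ) | σ x = -x}) hSfinite, ← Nat.card_coe_set_eq]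
    exact hcard1
end
end
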